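/- arXiv:2103.07459 — 2 statements merged into one kernel-verified Lean document; each statement's English description precedes it below -/
import Mathlib

section
/- Let μ be the Gibbs distribution of a totally-connected q-state spin system on an n-vertex graph, let w : V → ℝ_{>0} be any positive weight function, and let κ ∈ (0,1). If μ is κ-contractive with respect to the family of Glauber dynamics (one chain for each pinning) and the w-weighted Hamming metric d_w, then μ is spectrally independent with constant η = 2/((1−κ)n). In particular, if κ ≤ 1 − ε/n then η ≤ 2/ε. -/
open scoped BigOperators
open Classical
noncomputable section

/-- Spin configurations on `n` vertices with `q` spin values. -/
abbrev Cfg (n q : ℕ) := Fin n → Fin q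

/-! ### Generic finite probability notions -/

section Generic
variable {Ω : Type*} [Fintype Ω]

/-- Expectation of `f` under the (finitely supported) distribution `π`. -/
def expec (π f : Ω → ℝ) : ℝ := ∑ s, π s * f s

/-- Entropy functional `Ent_π(f) = π[f log f] - π[f] log π[f]`. -/
def entOf (π f : Ω → ℝ) : ℝ :=
  expec π (fun s => f s * Real.log (f s)) - expec π f * Real.log (expec π f)

/-- `π` is a probability distribution. -/
def IsProb (π : Ω → ℝ) : Prop := (∀ s, 0 ≤ π s) ∧ ∑ s, π s = 1

/-- `P` is a stochastic (Markov transition) matrix. -/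
def IsStochastic (P : Ω → Ω → ℝ) : Prop :=
  (∀ s s', 0 ≤ P s s') ∧ ∀ s, ∑ s', P s s' = 1

/-- `π` is a stationary distribution for `P`. -/
def IsStationaryFn (P : Ω → Ω → ℝ) (π : Ω → ℝ) : Prop :=
  ∀ s', ∑ s, π s * P s s' = π s'

/-- `t`-step transition probabilities. -/
def matPow (P : Ω → Ω → ℝ) : ℕ → Ω → Ω → ℝ
  | 0 => fun s s' => if s = s' then 1 else 0
  | t + 1 => fun s s' => ∑ s'', matPow P t s s'' * P s'' s'

/-- Total variation distance of two distributions. -/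
def tvDist (π ρ : Ω → ℝ) : ℝ := (∑ s, |π s - ρ s|) / 2

/-- Mixing time `max_{X₀} min { t : ‖P^t(X₀,·) − π‖_TV ≤ 1/4 }`. -/
def mixingTime (P : Ω → Ω → ℝ) (π : Ω → ℝ) : ℕ :=
  Finset.univ.sup fun s0 => sInf {t : ℕ | tvDist (matPow P t s0) π ≤ 1/4}

/-- Dirichlet form `D_P(f,g) = ⟨f, (I-P) g⟩_π`. -/
def dirichletForm (P : Ω → Ω → ℝ) (π f g : Ω → ℝ) : ℝ :=
  ∑ s, π s * (f s * (g s - ∑ s', P s s' * g s'))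

/-- The modified log-Sobolev inequality with constant `ρ`. -/
def MLSI (P : Ω → Ω → ℝ) (π : Ω → ℝ) (ρ : ℝ) : Prop :=
  ∀ f : Ω → ℝ, (∀ s, 0 < f s) →
    ρ * entOf π f ≤ dirichletForm P π f (fun s => Real.log (f s))

/-- The standard log-Sobolev inequality with constant `c`. -/
def LSI (P : Ω → Ω → ℝ) (π : Ω → ℝ) (c : ℝ) : Prop :=
  ∀ f : Ω → ℝ, (∀ s, 0 ≤ f s) →
    c * entOf π f ≤ dirichletForm P π (fun s => Real.sqrt (f s)) (fun s => Real.sqrt (f s))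

/-- `π` is a coupling of `μ` and `ν`. -/
def IsCoupling (π : Ω × Ω → ℝ) (μ ν : Ω → ℝ) : Prop :=
  (∀ p, 0 ≤ π p) ∧ (∀ s, ∑ s', π (s, s') = μ s) ∧ (∀ s', ∑ s, π (s, s') = ν s')

/-- 1-Wasserstein distance of `μ` and `ν` with respect to `d`. -/
def W1 (d : Ω → Ω → ℝ) (μ ν : Ω → ℝ) : ℝ :=
  sInf {r | ∃ π : Ω × Ω → ℝ, IsCoupling π μ ν ∧ r = ∑ p, π p * d p.1 p.2}

/-- Optimal Lipschitz constant of `f` with respect to `d`. -/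
def lipConst (d : Ω → Ω → ℝ) (f : Ω → ℝ) : ℝ :=
  sInf {L | 0 ≤ L ∧ ∀ a b, |f a - f b| ≤ L * d a b}

end Generic

/-- `d` is a metric (given as a real-valued distance function). -/
structure IsMetricFn {Ω : Type*} (d : Ω → Ω → ℝ) : Prop where
  refl : ∀ a, d a a = 0
  pos : ∀ a b, a ≠ b → 0 < d a b
  symm : ∀ a b, d a b = d b a
  triangle : ∀ a b c, d a c ≤ d a b + d b c

/-! ### Spin systems -/

/-- Hamming distance between two configurations. -/
def hamming {n q : ℕ} (σ τ : Cfg n q) : ℕ :=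
  (Finset.univ.filter fun x => σ x ≠ τ x).card

/-- The graph `G` has maximum degree at most `Δ`. -/
def maxDegreeLE {n : ℕ} (G : SimpleGraph (Fin n)) (Δ : ℕ) : Prop :=
  ∀ v : Fin n, (Finset.univ.filter fun u => G.Adj v u).card ≤ Δ

/-- A `q`-state spin system on the `n`-vertex graph `G`, given by nonnegative symmetric
pairwise interactions `A` on the edges and nonnegative external fields `B`. -/
structure SpinSystem (n q : ℕ) where
  G : SimpleGraph (Fin n)
  A : Fin n → Fin n → Fin q → Fin q → ℝ
  B : Fin n → Fin q → ℝ
  A_nonneg : ∀ x y a b, 0 ≤ A x y a b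
  A_symm : ∀ x y a b, A x y a b = A y x b a
  B_nonneg : ∀ x a, 0 ≤ B x a

namespace SpinSystem

variable {n q : ℕ}

/-- The weight of a configuration. -/
def wt (S : SpinSystem n q) (σ : Cfg n q) : ℝ :=
  (∏ x : Fin n, ∏ y : Fin n,
      if x < y ∧ S.G.Adj x y then S.A x y (σ x) (σ y) else 1) *
    ∏ x : Fin n, S.B x (σ x)

/-- The weight of a configuration compatible with the pinning `τ` on `U`. -/
def condWt (S : SpinSystem n q) (U : Finset (Fin n)) (τ σ : Cfg n q) : ℝ :=
  if ∀ x ∈ U, σ x = τ x then S.wt σ else 0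

/-- Conditional partition function given the pinning `τ` on `U`. -/
def condZ (S : SpinSystem n q) (U : Finset (Fin n)) (τ : Cfg n q) : ℝ :=
  ∑ σ : Cfg n q, S.condWt U τ σ

/-- The Gibbs distribution conditioned on the pinning `τ` on `U`. -/
def condMu (S : SpinSystem n q) (U : Finset (Fin n)) (τ : Cfg n q) (σ : Cfg n q) : ℝ :=
  S.condWt U τ σ / S.condZ U τ

/-- The (unconditioned) Gibbs distribution. -/
def gibbs (S : SpinSystem n q) : Cfg n q → ℝ := fun σ => S.wt σ / ∑ σ' : Cfg n q, S.wt σ'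

/-- `τ` restricted to `U` is a feasible pinning. -/
def IsPinning (S : SpinSystem n q) (U : Finset (Fin n)) (τ : Cfg n q) : Prop :=
  ∃ σ : Cfg n q, 0 < S.wt σ ∧ ∀ x ∈ U, σ x = τ x

/-- The marginal probability that the spin at `x` equals `a`, under the pinning `τ` on `U`. -/
def margin (S : SpinSystem n q) (U : Finset (Fin n)) (τ : Cfg n q) (x : Fin n) (a : Fin q) : ℝ :=
  ∑ σ : Cfg n q, if σ x = a then S.condMu U τ σ else 0

/-- `(x,a)` is a feasible (unpinned) vertex-spin pair under the pinning `τ` on `U`. -/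
def allowed (S : SpinSystem n q) (U : Finset (Fin n)) (τ : Cfg n q) (x : Fin n) (a : Fin q) :
    Prop :=
  x ∉ U ∧ 0 < S.margin U τ x a

/-- The ALO influence matrix `J^τ` of the pinned measure `μ^τ` (extended by `0` outside the
set of feasible vertex-spin pairs). -/
def Jmat (S : SpinSystem n q) (U : Finset (Fin n)) (τ : Cfg n q)
    (p p' : Fin n × Fin q) : ℝ :=
  if p.1 = p'.1 then 0
  else if S.allowed U τ p.1 p.2 ∧ S.allowed U τ p'.1 p'.2 then
    S.margin (insert p.1 U) (Function.update τ p.1 p.2) p'.1 p'.2 - S.margin U τ p'.1 p'.2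
  else 0

/-- Spectral independence: every (real) eigenvalue of every pinned influence matrix `J^τ`
is at most `η`. -/
def SpectrallyIndependent (S : SpinSystem n q) (η : ℝ) : Prop :=
  ∀ U τ, S.IsPinning U τ → ∀ (t : ℝ) (φ : Fin n × Fin q → ℝ),
    (∀ p, ¬ S.allowed U τ p.1 p.2 → φ p = 0) → φ ≠ 0 →
    (∀ p, (∑ p' : Fin n × Fin q, S.Jmat U τ p p' * φ p') = t * φ p) →
    t ≤ η

/-- `b`-marginal boundedness: every positive conditional marginal is at least `b`. -/
def MarginallyBounded (S : SpinSystem n q) (b : ℝ) : Prop :=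
  ∀ U τ, S.IsPinning U τ → ∀ x, x ∉ U → ∀ a : Fin q,
    0 < S.margin U τ x a → b ≤ S.margin U τ x a

/-- Total connectivity: for every pinning, any two configurations in the support of the
pinned measure are connected by single-site moves within the support. -/
def TotallyConnected (S : SpinSystem n q) : Prop :=
  ∀ U τ, S.IsPinning U τ → ∀ σ σ' : Cfg n q,
    0 < S.condWt U τ σ → 0 < S.condWt U τ σ' →
    Relation.ReflTransGen
      (fun a b => 0 < S.condWt U τ a ∧ 0 < S.condWt U τ b ∧ hamming a b = 1) σ σ'

/-- Conditional expectation `μ^U f` of `f` given the spins on `U`. -/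
def condExp (S : SpinSystem n q) (U : Finset (Fin n)) (f : Cfg n q → ℝ) : Cfg n q → ℝ :=
  fun σ => expec (S.condMu U σ) f

/-- Expected conditional entropy `μ[Ent_B f]`. -/
def muEnt (S : SpinSystem n q) (B : Finset (Fin n)) (f : Cfg n q → ℝ) : ℝ :=
  ∑ σ : Cfg n q, S.gibbs σ * entOf (S.condMu Bᶜ σ) f

/-- The `α`-weighted heat-bath block dynamics. -/
def blockDyn (S : SpinSystem n q) (α : Finset (Fin n) → ℝ) (σ σ' : Cfg n q) : ℝ :=
  ∑ B : Finset (Fin n), α B * S.condMu Bᶜ σ σ'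

/-- The Glauber dynamics for the measure pinned on `U` (a uniformly random vertex is chosen;
pinned vertices leave the configuration unchanged, unpinned vertices are resampled from the
conditional distribution given all the other spins). -/
def glauberPin (S : SpinSystem n q) (U : Finset (Fin n)) (σ σ' : Cfg n q) : ℝ :=
  (n : ℝ)⁻¹ * ∑ x : Fin n,
    if x ∈ U then (if σ' = σ then 1 else 0)
    else S.condMu (({x} : Finset (Fin n))ᶜ) σ σ'

/-- The (unpinned) Glauber dynamics. -/
def glauber (S : SpinSystem n q) : Cfg n q → Cfg n q → ℝ := S.glauberPin ∅

/-- The Dobrushin dependency matrix. -/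
def dobrushin (S : SpinSystem n q) (x y : Fin n) : ℝ :=
  if x = y then 0 else
    sSup {r | ∃ σ τ : Cfg n q,
      S.IsPinning (Finset.univ.erase y) σ ∧ S.IsPinning (Finset.univ.erase y) τ ∧
      (∀ z : Fin n, z ≠ x → z ≠ y → σ z = τ z) ∧
      r = tvDist (fun a : Fin q => S.margin (Finset.univ.erase y) σ y a)
                 (fun a : Fin q => S.margin (Finset.univ.erase y) τ y a)}

end SpinSystem

/-- `δ(α) = min_x ∑_{B ∋ x} α_B`. -/
def deltaOf (n : ℕ) (α : Finset (Fin n) → ℝ) : ℝ :=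
  ⨅ x : Fin n, ∑ B ∈ Finset.univ.filter (fun B : Finset (Fin n) => x ∈ B), α B

/-- General block factorization of entropy with constant `C`. -/
def GBF {n q : ℕ} (S : SpinSystem n q) (C : ℝ) : Prop :=
  ∀ α : Finset (Fin n) → ℝ, (∀ B, 0 ≤ α B) → (∑ B : Finset (Fin n), α B = 1) →
    ∀ f : Cfg n q → ℝ, (∀ σ, 0 ≤ f σ) →
      deltaOf n α * entOf S.gibbs f ≤ C * ∑ B : Finset (Fin n), α B * S.muEnt B f

/-- `ℓ`-uniform block factorization of entropy with constant `C`. -/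
def UBF {n q : ℕ} (S : SpinSystem n q) (ℓ : ℕ) (C : ℝ) : Prop :=
  ∀ f : Cfg n q → ℝ, (∀ σ, 0 ≤ f σ) →
    ((ℓ : ℝ) / n) * entOf S.gibbs f ≤
      C * ((Nat.choose n ℓ : ℝ)⁻¹ *
        ∑ Λ ∈ Finset.powersetCard ℓ (Finset.univ : Finset (Fin n)), S.muEnt Λ f)

/-- `P` is a partition of the vertex set into independent sets of `G`. -/
def IsIndepPartition {n k : ℕ} (G : SimpleGraph (Fin n)) (P : Fin k → Finset (Fin n)) : Prop :=
  (∀ x : Fin n, ∃! i, x ∈ P i) ∧ ∀ i, ∀ x ∈ P i, ∀ y ∈ P i, ¬ G.Adj x y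

/-- `k`-partite factorization of entropy with constant `C` relative to the partition `P`. -/
def KPF {n q k : ℕ} (S : SpinSystem n q) (P : Fin k → Finset (Fin n)) (C : ℝ) : Prop :=
  ∀ f : Cfg n q → ℝ, (∀ σ, 0 ≤ f σ) →
    entOf S.gibbs f ≤ C * ∑ i : Fin k, S.muEnt (P i) f

/-! ### Metrics on configurations and contraction -/

/-- Hamming metric, real-valued. -/
def dHam {n q : ℕ} (σ τ : Cfg n q) : ℝ := (hamming σ τ : ℝ)

/-- `w`-weighted Hamming metric. -/
def dW {n q : ℕ} (w : Fin n → ℝ) (σ τ : Cfg n q) : ℝ :=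
  ∑ x : Fin n, if σ x ≠ τ x then w x else 0

/-- `d` is `γ`-equivalent to the Hamming metric. -/
def GammaEquiv {n q : ℕ} (γ : ℝ) (d : Cfg n q → Cfg n q → ℝ) : Prop :=
  ∀ σ τ : Cfg n q, (1 / γ) * dHam σ τ ≤ d σ τ ∧ d σ τ ≤ γ * dHam σ τ

/-- `μ` is `κ`-contractive with respect to the family of chains `P` (one for each pinning)
and the metric `d`: from any two states in the support of the pinned measure there is a
one-step coupling contracting `d` by a factor `κ` in expectation. -/
def ContractiveFam {n q : ℕ} (S : SpinSystem n q)
    (P : Finset (Fin n) → Cfg n q → Cfg n q → Cfg n q → ℝ)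
    (d : Cfg n q → Cfg n q → ℝ) (κ : ℝ) : Prop :=
  ∀ U τ, S.IsPinning U τ → ∀ X₀ Y₀ : Cfg n q,
    0 < S.condWt U τ X₀ → 0 < S.condWt U τ Y₀ →
    ∃ π : Cfg n q × Cfg n q → ℝ,
      IsCoupling π (P U τ X₀) (P U τ Y₀) ∧
      (∑ p : Cfg n q × Cfg n q, π p * d p.1 p.2) ≤ κ * d X₀ Y₀

/-- The family of chains `P` is `Φ`-local: extending a pinning by a single feasible
vertex-spin pair changes one step of the chain by at most `Φ` in Wasserstein distance
with respect to the Hamming metric. -/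
def PhiLocal {n q : ℕ} (S : SpinSystem n q)
    (P : Finset (Fin n) → Cfg n q → Cfg n q → Cfg n q → ℝ) (Φ : ℝ) : Prop :=
  ∀ U τ, S.IsPinning U τ → ∀ x, x ∉ U → ∀ a : Fin q,
    0 < S.margin U τ x a →
    ∀ σ : Cfg n q, 0 < S.condWt (insert x U) (Function.update τ x a) σ →
      W1 dHam (P U τ σ) (P (insert x U) (Function.update τ x a) σ) ≤ Φ

/-- A select-update dynamics for the spin system `S`: a block is selected from a
distribution that may depend on the current configuration (but not on the pinning),
and the configuration on the block is resampled from a distribution that may depend on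
the current configuration and on the restriction of the pinning to the block; for each
pinning the resulting chain has the pinned Gibbs measure as stationary distribution. -/
structure SelectUpdate {n q : ℕ} (S : SpinSystem n q) where
  blocks : Finset (Finset (Fin n))
  sel : Cfg n q → Finset (Fin n) → ℝ
  sel_nonneg : ∀ σ B, 0 ≤ sel σ B
  sel_sum : ∀ σ, ∑ B ∈ blocks, sel σ B = 1
  upd : Finset (Fin n) → Cfg n q → Cfg n q → Finset (Fin n) → Cfg n q → ℝ
  upd_nonneg : ∀ U τ σ B σ', 0 ≤ upd U τ σ B σ'
  upd_sum : ∀ U τ σ B, ∑ σ' : Cfg n q, upd U τ σ B σ' = 1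
  upd_off : ∀ U τ σ B σ', upd U τ σ B σ' ≠ 0 → ∀ x ∉ B, σ' x = σ x
  upd_local : ∀ U U' τ τ' σ B, U ∩ B = U' ∩ B → (∀ x ∈ U ∩ B, τ x = τ' x) →
    upd U τ σ B = upd U' τ' σ B
  stat : ∀ U τ, S.IsPinning U τ →
    IsStationaryFn (fun σ σ' => ∑ B ∈ blocks, sel σ B * upd U τ σ B σ') (S.condMu U τ)

/-- The transition matrix of the select-update dynamics under the pinning `τ` on `U`. -/
def SelectUpdate.chain {n q : ℕ} {S : SpinSystem n q} (SU : SelectUpdate S)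
    (U : Finset (Fin n)) (τ : Cfg n q) (σ σ' : Cfg n q) : ℝ :=
  ∑ B ∈ SU.blocks, SU.sel σ B * SU.upd U τ σ B σ'

/-- Spectral radius of a real square matrix (largest modulus of a complex eigenvalue). -/
def specRad {n : ℕ} (M : Matrix (Fin n) (Fin n) ℝ) : ℝ :=
  sSup {r : ℝ | ∃ z : ℂ, z ∈ spectrum ℂ (M.map ((↑) : ℝ → ℂ)) ∧ r = ‖z‖}

/-! ### Models: Potts/Ising, colorings, Swendsen-Wang, Edwards-Sokal -/

/-- The `q`-state ferromagnetic Potts model at inverse temperature `β`. -/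
def pottsSystem (n q : ℕ) (β : ℝ) (G : SimpleGraph (Fin n)) : SpinSystem n q where
  G := G
  A := fun _ _ a b => Real.exp (if a = b then β else 0)
  B := fun _ _ => 1
  A_nonneg := fun _ _ _ _ => (Real.exp_pos _).le
  A_symm := by
    intro x y a b
    by_cases h : a = b
    · subst h; rfl
    · have h' : ¬ b = a := fun hba => h hba.symm
      simp [h, h']
  B_nonneg := fun _ _ => zero_le_one

/-- The ferromagnetic Ising model at inverse temperature `β`. -/
def isingSystem (n : ℕ) (β : ℝ) (G : SimpleGraph (Fin n)) : SpinSystem n 2 :=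
  pottsSystem n 2 β G

/-- The proper `q`-colorings model (so its Gibbs distribution is the uniform distribution
over proper `q`-colorings). -/
def coloringSystem (n q : ℕ) (G : SimpleGraph (Fin n)) : SpinSystem n q where
  G := G
  A := fun _ _ a b => if a = b then 0 else 1
  B := fun _ _ => 1
  A_nonneg := by
    intro x y a b; split <;> norm_num
  A_symm := by
    intro x y a b
    by_cases h : a = b
    · subst h; rfl
    · have h' : ¬ b = a := fun hba => h hba.symm
      simp [h, h']
  B_nonneg := fun _ _ => zero_le_one

/-- The set of edges of `G` that are monochromatic in `σ`. -/
def monoEdges {n q : ℕ} (G : SimpleGraph (Fin n)) (σ : Cfg n q) : Finset (Sym2 (Fin n)) :=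
  Finset.univ.filter fun e => e ∈ G.edgeSet ∧ ∀ x ∈ e, ∀ y ∈ e, σ x = σ y

/-- The edge set of `G` as a finset. -/
def edgesOf {n : ℕ} (G : SimpleGraph (Fin n)) : Finset (Sym2 (Fin n)) :=
  Finset.univ.filter fun e => e ∈ G.edgeSet

/-- The Swendsen-Wang dynamics: each monochromatic edge is retained independently with
probability `p`, and then every connected component of the retained graph receives an
independent uniformly random spin. -/
def swStep {n : ℕ} (G : SimpleGraph (Fin n)) (q : ℕ) (p : ℝ) (σ σ' : Cfg n q) : ℝ :=
  ∑ A ∈ (monoEdges G σ).powerset,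
    p ^ A.card * (1 - p) ^ ((monoEdges G σ).card - A.card) *
      (if ∀ x y : Fin n,
            (SimpleGraph.fromEdgeSet (A : Set (Sym2 (Fin n)))).Reachable x y → σ' x = σ' y
       then ((q : ℝ))⁻¹ ^
          (Nat.card (SimpleGraph.fromEdgeSet (A : Set (Sym2 (Fin n)))).ConnectedComponent)
       else 0)

/-- Edwards-Sokal weight of a joint spin-edge configuration, with `p = 1 - e^{-β}`. -/
def esWt {n : ℕ} (G : SimpleGraph (Fin n)) (q : ℕ) (β : ℝ)
    (p0 : Cfg n q × Finset (Sym2 (Fin n))) : ℝ :=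
  if p0.2 ⊆ monoEdges G p0.1 then
    (1 - Real.exp (-β)) ^ p0.2.card * (Real.exp (-β)) ^ ((edgesOf G).card - p0.2.card)
  else 0

/-- Edwards-Sokal (joint) measure. -/
def esMu {n : ℕ} (G : SimpleGraph (Fin n)) (q : ℕ) (β : ℝ)
    (p0 : Cfg n q × Finset (Sym2 (Fin n))) : ℝ :=
  esWt G q β p0 / ∑ p1 : Cfg n q × Finset (Sym2 (Fin n)), esWt G q β p1

/-- Edwards-Sokal measure conditioned on the spin configuration being `σ0`. -/
def esCondSpin {n : ℕ} (G : SimpleGraph (Fin n)) (q : ℕ) (β : ℝ) (σ0 : Cfg n q)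
    (p0 : Cfg n q × Finset (Sym2 (Fin n))) : ℝ :=
  if p0.1 = σ0 then
    esWt G q β p0 / ∑ A : Finset (Sym2 (Fin n)), esWt G q β (σ0, A)
  else 0

/-- Edwards-Sokal measure conditioned on the edge configuration being `A0`. -/
def esCondEdge {n : ℕ} (G : SimpleGraph (Fin n)) (q : ℕ) (β : ℝ) (A0 : Finset (Sym2 (Fin n)))
    (p0 : Cfg n q × Finset (Sym2 (Fin n))) : ℝ :=
  if p0.2 = A0 then
    esWt G q β p0 / ∑ σ : Cfg n q, esWt G q β (σ, A0)
  else 0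

/-- `ν[Ent_ν(f | σ)]`: the expected conditional entropy of `f` given the spins. -/
def esSpinEnt {n : ℕ} (G : SimpleGraph (Fin n)) (q : ℕ) (β : ℝ)
    (f : Cfg n q × Finset (Sym2 (Fin n)) → ℝ) : ℝ :=
  ∑ p0 : Cfg n q × Finset (Sym2 (Fin n)), esMu G q β p0 * entOf (esCondSpin G q β p0.1) f

/-- `ν[Ent_ν(f | A)]`: the expected conditional entropy of `f` given the edges. -/
def esEdgeEnt {n : ℕ} (G : SimpleGraph (Fin n)) (q : ℕ) (β : ℝ)
    (f : Cfg n q × Finset (Sym2 (Fin n)) → ℝ) : ℝ :=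
  ∑ p0 : Cfg n q × Finset (Sym2 (Fin n)), esMu G q β p0 * entOf (esCondEdge G q β p0.2) f


/-! ### Auxiliary lemmas -/

section AuxGeneric
variable {Ω : Type*} [Fintype Ω]

lemma coupling_le_left {π : Ω × Ω → ℝ} {μ ν : Ω → ℝ} (h : IsCoupling π μ ν) (u v : Ω) :
    π (u, v) ≤ μ u := by
  rw [← h.2.1 u]
  exact Finset.single_le_sum (fun i _ => h.1 (u, i)) (Finset.mem_univ v)

lemma coupling_le_right {π : Ω × Ω → ℝ} {μ ν : Ω → ℝ} (h : IsCoupling π μ ν) (u v : Ω) :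
    π (u, v) ≤ ν v := by
  rw [← h.2.2 v]
  exact Finset.single_le_sum (fun i _ => h.1 (i, v)) (Finset.mem_univ u)

lemma tri_sum (g : Ω → Ω → Ω → ℝ) :
    (∑ p : Ω × Ω, ∑ v, g p.1 v p.2) = ∑ v, ∑ u, ∑ w, g u v w := by
  calc (∑ p : Ω × Ω, ∑ v, g p.1 v p.2) = ∑ u, ∑ w, ∑ v, g u v w := by
        rw [Fintype.sum_prod_type]
    _ = ∑ u, ∑ v, ∑ w, g u v w := Finset.sum_congr rfl fun u _ => Finset.sum_comm
    _ = ∑ v, ∑ u, ∑ w, g u v w := Finset.sum_comm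

lemma glueCoupling (d : Ω → Ω → ℝ) (hd0 : ∀ a b, 0 ≤ d a b)
    (hdt : ∀ a b c, d a c ≤ d a b + d b c)
    (α β γ : Ω → ℝ) (π₁ π₂ : Ω × Ω → ℝ)
    (h1 : IsCoupling π₁ α β) (h2 : IsCoupling π₂ β γ) :
    ∃ π : Ω × Ω → ℝ, IsCoupling π α γ ∧
      (∑ p : Ω × Ω, π p * d p.1 p.2) ≤
        (∑ p : Ω × Ω, π₁ p * d p.1 p.2) + (∑ p : Ω × Ω, π₂ p * d p.1 p.2) := by
  have hβ0 : ∀ v, 0 ≤ β v := by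
    intro v; rw [← h2.2.1 v]; exact Finset.sum_nonneg fun i _ => h2.1 (v, i)
  have h1z : ∀ u v, β v = 0 → π₁ (u, v) = 0 := fun u v hv =>
    le_antisymm (by simpa [hv] using coupling_le_right h1 u v) (h1.1 _)
  have h2z : ∀ v w, β v = 0 → π₂ (v, w) = 0 := fun v w hv =>
    le_antisymm (by simpa [hv] using coupling_le_left h2 v w) (h2.1 _)
  have hterm0 : ∀ u v w, 0 ≤ (if β v = 0 then 0 else π₁ (u, v) * π₂ (v, w) / β v) := by
    intro u v w
    split
    · exact le_rfl
    · exact div_nonneg (mul_nonneg (h1.1 _) (h2.1 _)) (hβ0 v)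
  have hM1 : ∀ u v, (∑ w, if β v = 0 then 0 else π₁ (u, v) * π₂ (v, w) / β v) = π₁ (u, v) := by
    intro u v
    by_cases hv : β v = 0
    · simp [hv, h1z u v hv]
    · simp only [if_neg hv]
      rw [← Finset.sum_div, ← Finset.mul_sum, h2.2.1 v, mul_div_assoc, div_self hv, mul_one]
  have hM2 : ∀ v w, (∑ u, if β v = 0 then 0 else π₁ (u, v) * π₂ (v, w) / β v) = π₂ (v, w) := by
    intro v w
    by_cases hv : β v = 0
    · simp [hv, h2z v w hv]
    · simp only [if_neg hv]
      rw [← Finset.sum_div, ← Finset.sum_mul, h1.2.2 v, mul_comm, mul_div_assoc, div_self hv,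
        mul_one]
  refine ⟨fun p => ∑ v, if β v = 0 then 0 else π₁ (p.1, v) * π₂ (v, p.2) / β v, ⟨?_, ?_, ?_⟩, ?_⟩
  · exact fun p => Finset.sum_nonneg fun v _ => hterm0 p.1 v p.2
  · intro u
    rw [Finset.sum_comm]
    simp only [hM1]
    exact h1.2.1 u
  · intro w
    rw [Finset.sum_comm]
    simp only [hM2]
    exact h2.2.2 w
  · have expand : (∑ p : Ω × Ω, (∑ v, if β v = 0 then 0 else π₁ (p.1, v) * π₂ (v, p.2) / β v) * d p.1 p.2)
        = ∑ p : Ω × Ω, ∑ v, (if β v = 0 then 0 else π₁ (p.1, v) * π₂ (v, p.2) / β v) * d p.1 p.2 := by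
      simp [Finset.sum_mul]
    rw [expand]
    have step1 : (∑ p : Ω × Ω, ∑ v, (if β v = 0 then 0 else π₁ (p.1, v) * π₂ (v, p.2) / β v) * d p.1 p.2)
        ≤ ∑ p : Ω × Ω, ∑ v, (if β v = 0 then 0 else π₁ (p.1, v) * π₂ (v, p.2) / β v) * (d p.1 v + d v p.2) := by
      refine Finset.sum_le_sum fun p _ => Finset.sum_le_sum fun v _ =>
        mul_le_mul_of_nonneg_left (hdt p.1 v p.2) (hterm0 p.1 v p.2)
    refine step1.trans (le_of_eq ?_)
    have split : (∑ p : Ω × Ω, ∑ v, (if β v = 0 then 0 else π₁ (p.1, v) * π₂ (v, p.2) / β v) * (d p.1 v + d v p.2))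
        = (∑ p : Ω × Ω, ∑ v, (if β v = 0 then 0 else π₁ (p.1, v) * π₂ (v, p.2) / β v) * d p.1 v)
        + (∑ p : Ω × Ω, ∑ v, (if β v = 0 then 0 else π₁ (p.1, v) * π₂ (v, p.2) / β v) * d v p.2) := by
      rw [← Finset.sum_add_distrib]
      refine Finset.sum_congr rfl fun p _ => ?_
      rw [← Finset.sum_add_distrib]
      exact Finset.sum_congr rfl fun v _ => by ring
    rw [split]
    congr 1
    · rw [tri_sum (fun u v w => (if β v = 0 then 0 else π₁ (u, v) * π₂ (v, w) / β v) * d u v)]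
      rw [Fintype.sum_prod_type, Finset.sum_comm]
      refine Finset.sum_congr rfl fun v _ => Finset.sum_congr rfl fun u _ => ?_
      rw [← Finset.sum_mul, hM1]
    · rw [tri_sum (fun u v w => (if β v = 0 then 0 else π₁ (u, v) * π₂ (v, w) / β v) * d v w)]
      rw [Fintype.sum_prod_type]
      refine Finset.sum_congr rfl fun v _ => ?_
      rw [Finset.sum_comm]
      refine Finset.sum_congr rfl fun w _ => ?_
      rw [← Finset.sum_mul, hM2]

lemma coupling_step (d : Ω → Ω → ℝ) (μ ν : Ω → ℝ) (P Q : Ω → Ω → ℝ)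
    (hμP : ∀ u, ∑ X, μ X * P X u = μ u) (hνQ : ∀ u, ∑ Y, ν Y * Q Y u = ν u)
    (π : Ω × Ω → ℝ) (hπ : IsCoupling π μ ν) (c : Ω × Ω → ℝ)
    (hK : ∀ p, 0 < π p → ∃ K : Ω × Ω → ℝ, IsCoupling K (P p.1) (Q p.2) ∧
      (∑ r : Ω × Ω, K r * d r.1 r.2) ≤ c p) :
    ∃ π' : Ω × Ω → ℝ, IsCoupling π' μ ν ∧
      (∑ r : Ω × Ω, π' r * d r.1 r.2) ≤ ∑ p : Ω × Ω, π p * c p := by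
  classical
  set K : Ω × Ω → Ω × Ω → ℝ := fun p => if h : 0 < π p then (hK p h).choose else fun _ => 0
    with hKdef
  have hKspec : ∀ p, 0 < π p → IsCoupling (K p) (P p.1) (Q p.2) ∧
      (∑ r : Ω × Ω, K p r * d r.1 r.2) ≤ c p := by
    intro p hp
    simp only [hKdef, dif_pos hp]
    exact (hK p hp).choose_spec
  have hπ0 : ∀ p, π p = 0 ∨ 0 < π p := fun p => (hπ.1 p).eq_or_lt.imp Eq.symm id
  refine ⟨fun r => ∑ p : Ω × Ω, π p * K p r, ⟨?_, ?_, ?_⟩, ?_⟩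
  · intro r
    refine Finset.sum_nonneg fun p _ => ?_
    rcases hπ0 p with h | h
    · simp [h]
    · exact mul_nonneg (hπ.1 p) ((hKspec p h).1.1 r)
  · intro u
    rw [Finset.sum_comm]
    have : ∀ p : Ω × Ω, (∑ v, π p * K p (u, v)) = π p * P p.1 u := by
      intro p
      rcases hπ0 p with h | h
      · simp [h]
      · rw [← Finset.mul_sum, (hKspec p h).1.2.1 u]
    rw [Finset.sum_congr rfl fun p _ => this p]
    rw [Fintype.sum_prod_type]
    calc (∑ x, ∑ y, π (x, y) * P (x, y).1 u) = ∑ x, μ x * P x u := by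
          refine Finset.sum_congr rfl fun x _ => ?_
          have h0 : ∀ y : Ω, π (x, y) * P (x, y).1 u = π (x, y) * P x u := fun y => rfl
          rw [Finset.sum_congr rfl fun y _ => h0 y, ← Finset.sum_mul, hπ.2.1 x]
      _ = μ u := hμP u
  · intro v
    rw [Finset.sum_comm]
    have : ∀ p : Ω × Ω, (∑ u, π p * K p (u, v)) = π p * Q p.2 v := by
      intro p
      rcases hπ0 p with h | h
      · simp [h]
      · rw [← Finset.mul_sum, (hKspec p h).1.2.2 v]
    rw [Finset.sum_congr rfl fun p _ => this p]
    have swap : (∑ p : Ω × Ω, π p * Q p.2 v) = ∑ Y, (∑ X, π (X, Y)) * Q Y v := by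
      rw [Fintype.sum_prod_type, Finset.sum_comm]
      exact Finset.sum_congr rfl fun Y _ => by rw [Finset.sum_mul]
    rw [swap, Finset.sum_congr rfl fun Y (_ : Y ∈ Finset.univ) => by rw [hπ.2.2 Y]]
    exact hνQ v
  · have : (∑ r : Ω × Ω, (∑ p : Ω × Ω, π p * K p r) * d r.1 r.2)
        = ∑ p : Ω × Ω, π p * (∑ r : Ω × Ω, K p r * d r.1 r.2) := by
      calc (∑ r : Ω × Ω, (∑ p : Ω × Ω, π p * K p r) * d r.1 r.2)
          = ∑ r : Ω × Ω, ∑ p : Ω × Ω, π p * (K p r * d r.1 r.2) := by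
            refine Finset.sum_congr rfl fun r _ => ?_
            rw [Finset.sum_mul]
            exact Finset.sum_congr rfl fun p _ => by ring
        _ = ∑ p : Ω × Ω, ∑ r : Ω × Ω, π p * (K p r * d r.1 r.2) := Finset.sum_comm
        _ = ∑ p : Ω × Ω, π p * (∑ r : Ω × Ω, K p r * d r.1 r.2) :=
            Finset.sum_congr rfl fun p _ => (Finset.mul_sum _ _ _).symm
    rw [this]
    refine Finset.sum_le_sum fun p _ => ?_
    rcases hπ0 p with h | h
    · simp [h]
    · exact mul_le_mul_of_nonneg_left (hKspec p h).2 (hπ.1 p)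


end AuxGeneric

section AuxSpin

namespace SpinSystem

variable {n q : ℕ} (S : SpinSystem n q)

lemma wt_nonneg (σ : Cfg n q) : 0 ≤ S.wt σ := by
  unfold wt
  refine mul_nonneg (Finset.prod_nonneg fun x _ => Finset.prod_nonneg fun y _ => ?_)
    (Finset.prod_nonneg fun x _ => S.B_nonneg x (σ x))
  split
  · exact S.A_nonneg _ _ _ _
  · exact zero_le_one

lemma condWt_nonneg (U : Finset (Fin n)) (τ σ : Cfg n q) : 0 ≤ S.condWt U τ σ := by
  unfold condWt
  split
  · exact S.wt_nonneg σ
  · exact le_rfl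

lemma condZ_nonneg (U : Finset (Fin n)) (τ : Cfg n q) : 0 ≤ S.condZ U τ :=
  Finset.sum_nonneg fun σ _ => S.condWt_nonneg U τ σ

lemma condZ_pos {U : Finset (Fin n)} {τ : Cfg n q} (h : S.IsPinning U τ) :
    0 < S.condZ U τ := by
  obtain ⟨σ, hσ, hag⟩ := h
  refine Finset.sum_pos' (fun ρ _ => S.condWt_nonneg U τ ρ) ⟨σ, Finset.mem_univ σ, ?_⟩
  unfold condWt
  rw [if_pos hag]
  exact hσ

lemma condMu_nonneg (U : Finset (Fin n)) (τ σ : Cfg n q) : 0 ≤ S.condMu U τ σ :=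
  div_nonneg (S.condWt_nonneg U τ σ) (S.condZ_nonneg U τ)

lemma condMu_sum {U : Finset (Fin n)} {τ : Cfg n q} (h : S.IsPinning U τ) :
    ∑ σ : Cfg n q, S.condMu U τ σ = 1 := by
  unfold condMu
  rw [← Finset.sum_div]
  exact div_self (S.condZ_pos h).ne'

lemma condWt_pos_of_condMu_pos {U : Finset (Fin n)} {τ σ : Cfg n q}
    (h : 0 < S.condMu U τ σ) : 0 < S.condWt U τ σ := by
  by_contra hc
  have h0 : S.condWt U τ σ = 0 := le_antisymm (not_lt.mp hc) (S.condWt_nonneg U τ σ)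
  rw [condMu, h0, zero_div] at h
  exact lt_irrefl 0 h

lemma condMu_pos_of_condWt_pos {U : Finset (Fin n)} {τ σ : Cfg n q}
    (hpin : S.IsPinning U τ) (h : 0 < S.condWt U τ σ) : 0 < S.condMu U τ σ :=
  div_pos h (S.condZ_pos hpin)

lemma wt_pos_of_condWt_pos {U : Finset (Fin n)} {τ σ : Cfg n q}
    (h : 0 < S.condWt U τ σ) : 0 < S.wt σ ∧ ∀ x ∈ U, σ x = τ x := by
  unfold condWt at h
  by_cases hag : ∀ x ∈ U, σ x = τ x
  · exact ⟨by rwa [if_pos hag] at h, hag⟩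
  · rw [if_neg hag] at h; exact absurd h (lt_irrefl 0)

lemma mem_complSingleton {y z : Fin n} : z ∈ ({y} : Finset (Fin n))ᶜ ↔ z ≠ y := by
  simp [Finset.mem_compl]

/-- Summing over configurations agreeing with `σ'` off `y` is summing over the spin at `y`. -/
lemma sum_agree (y : Fin n) (σ' : Cfg n q) (f : Cfg n q → ℝ) :
    (∑ σ : Cfg n q, if ∀ z ∈ ({y} : Finset (Fin n))ᶜ, σ z = σ' z then f σ else 0)
      = ∑ a : Fin q, f (Function.update σ' y a) := by
  classical
  rw [← Finset.sum_filter]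
  have himg : Finset.univ.filter (fun σ : Cfg n q => ∀ z ∈ ({y} : Finset (Fin n))ᶜ, σ z = σ' z)
      = Finset.image (fun a => Function.update σ' y a) Finset.univ := by
    ext σ
    simp only [Finset.mem_filter, Finset.mem_univ, true_and, Finset.mem_image]
    constructor
    · intro h
      refine ⟨σ y, ?_⟩
      funext z
      by_cases hz : z = y
      · subst hz; simp [Function.update]
      · rw [Function.update_of_ne hz]
        exact (h z (mem_complSingleton.mpr hz)).symm
    · rintro ⟨a, rfl⟩ z hz
      exact Function.update_of_ne (mem_complSingleton.mp hz) a σ'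
  rw [himg, Finset.sum_image]
  intro a _ b _ hab
  have := congrFun hab y
  simpa using this

variable (S : SpinSystem n q)

/-- `condWt` with pinning set `{y}ᶜ` only depends on the pinning configuration off `y`. -/
lemma condWt_compl_congr {y : Fin n} {σ σ' : Cfg n q}
    (h : ∀ z ∈ ({y} : Finset (Fin n))ᶜ, σ z = σ' z) (ρ : Cfg n q) :
    S.condWt ({y} : Finset (Fin n))ᶜ σ ρ = S.condWt ({y} : Finset (Fin n))ᶜ σ' ρ := by
  unfold condWt
  have : (∀ z ∈ ({y} : Finset (Fin n))ᶜ, ρ z = σ z) ↔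
      (∀ z ∈ ({y} : Finset (Fin n))ᶜ, ρ z = σ' z) := by
    constructor <;> intro hh z hz
    · rw [hh z hz, h z hz]
    · rw [hh z hz, ← h z hz]
  by_cases hc : ∀ z ∈ ({y} : Finset (Fin n))ᶜ, ρ z = σ z
  · rw [if_pos hc, if_pos (this.mp hc)]
  · rw [if_neg hc, if_neg (fun hc' => hc (this.mpr hc'))]

lemma condZ_compl_congr {y : Fin n} {σ σ' : Cfg n q}
    (h : ∀ z ∈ ({y} : Finset (Fin n))ᶜ, σ z = σ' z) :
    S.condZ ({y} : Finset (Fin n))ᶜ σ = S.condZ ({y} : Finset (Fin n))ᶜ σ' :=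
  Finset.sum_congr rfl fun ρ _ => S.condWt_compl_congr h ρ

lemma condZ_compl_eq_sum (y : Fin n) (σ' : Cfg n q) :
    S.condZ ({y} : Finset (Fin n))ᶜ σ' = ∑ a : Fin q, S.wt (Function.update σ' y a) := by
  unfold condZ condWt
  rw [← sum_agree y σ' (fun σ => S.wt σ)]

lemma condZ_compl_pos {y : Fin n} {σ' : Cfg n q} (h : 0 < S.wt σ') :
    0 < S.condZ ({y} : Finset (Fin n))ᶜ σ' :=
  S.condZ_pos ⟨σ', h, fun _ _ => rfl⟩

/-- Heat-bath update at an unpinned site preserves the pinned Gibbs measure. -/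
lemma heatbath_stationary {U : Finset (Fin n)} {τ : Cfg n q} (hpin : S.IsPinning U τ)
    {y : Fin n} (hy : y ∉ U) (σ' : Cfg n q) :
    ∑ σ : Cfg n q, S.condMu U τ σ * S.condMu (({y} : Finset (Fin n))ᶜ) σ σ'
      = S.condMu U τ σ' := by
  have hZ := S.condZ_pos hpin
  suffices hS : (∑ σ : Cfg n q, S.condWt U τ σ * S.condMu (({y} : Finset (Fin n))ᶜ) σ σ')
      = S.condWt U τ σ' by
    unfold condMu
    rw [← hS, Finset.sum_div]
    refine Finset.sum_congr rfl fun σ _ => ?_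
    rw [div_mul_eq_mul_div]
    rfl
  by_cases hw' : 0 < S.wt σ'
  · by_cases hag' : ∀ x ∈ U, σ' x = τ x
    · -- main case
      have hterm : ∀ σ : Cfg n q,
          S.condWt U τ σ * S.condMu (({y} : Finset (Fin n))ᶜ) σ σ'
          = (if ∀ z ∈ ({y} : Finset (Fin n))ᶜ, σ z = σ' z then
              S.wt σ * S.wt σ' / S.condZ ({y} : Finset (Fin n))ᶜ σ' else 0) := by
        intro σ
        by_cases hagσ : ∀ z ∈ ({y} : Finset (Fin n))ᶜ, σ z = σ' z
        · rw [if_pos hagσ]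
          have hUσ : ∀ x ∈ U, σ x = τ x := by
            intro x hx
            have hxy : x ≠ y := fun hxy => hy (hxy ▸ hx)
            rw [hagσ x (mem_complSingleton.mpr hxy)]
            exact hag' x hx
          have h1 : S.condWt U τ σ = S.wt σ := if_pos hUσ
          have h2 : S.condWt (({y} : Finset (Fin n))ᶜ) σ σ' = S.wt σ' := by
            unfold condWt
            rw [if_pos (fun z hz => (hagσ z hz).symm)]
          have h3 : S.condZ (({y} : Finset (Fin n))ᶜ) σ = S.condZ ({y} : Finset (Fin n))ᶜ σ' :=
            S.condZ_compl_congr hagσ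
          rw [h1, condMu, h2, h3, mul_div_assoc]
        · rw [if_neg hagσ]
          have h2 : S.condWt (({y} : Finset (Fin n))ᶜ) σ σ' = 0 := by
            unfold condWt
            rw [if_neg (fun hc => hagσ (fun z hz => (hc z hz).symm))]
          rw [condMu, h2, zero_div, mul_zero]
      rw [Finset.sum_congr rfl fun σ _ => hterm σ]
      rw [sum_agree y σ' (fun σ => S.wt σ * S.wt σ' / S.condZ ({y} : Finset (Fin n))ᶜ σ')]
      rw [← Finset.sum_div, ← Finset.sum_mul, ← S.condZ_compl_eq_sum y σ']
      have hZy : S.condZ ({y} : Finset (Fin n))ᶜ σ' ≠ 0 := (S.condZ_compl_pos hw').ne'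
      rw [mul_comm, mul_div_assoc, div_self hZy, mul_one]
      exact (if_pos hag').symm
    · -- σ' violates pinning : both sides vanish
      have hR : S.condWt U τ σ' = 0 := if_neg hag'
      rw [hR]
      refine Finset.sum_eq_zero fun σ _ => ?_
      by_cases hUσ : ∀ x ∈ U, σ x = τ x
      · have h2 : S.condWt (({y} : Finset (Fin n))ᶜ) σ σ' = 0 := by
          unfold condWt
          rw [if_neg]
          intro hc
          apply hag'
          intro x hx
          have hxy : x ≠ y := fun hxy => hy (hxy ▸ hx)
          rw [hc x (mem_complSingleton.mpr hxy), hUσ x hx]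
        rw [condMu, h2, zero_div, mul_zero]
      · rw [condWt, if_neg hUσ, zero_mul]
  · -- wt σ' = 0 : both sides vanish
    have hw0 : S.wt σ' = 0 := le_antisymm (not_lt.mp hw') (S.wt_nonneg σ')
    have hR : S.condWt U τ σ' = 0 := by
      unfold condWt
      split
      · exact hw0
      · rfl
    rw [hR]
    refine Finset.sum_eq_zero fun σ _ => ?_
    have h2 : S.condWt (({y} : Finset (Fin n))ᶜ) σ σ' = 0 := by
      unfold condWt
      split
      · exact hw0
      · rfl
    rw [condMu, h2, zero_div, mul_zero]

/-- The pinned Glauber dynamics has the pinned Gibbs measure as stationary distribution. -/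
lemma glauber_stationary (hn : 0 < n) {U : Finset (Fin n)} {τ : Cfg n q}
    (hpin : S.IsPinning U τ) (σ' : Cfg n q) :
    ∑ σ : Cfg n q, S.condMu U τ σ * S.glauberPin U σ σ' = S.condMu U τ σ' := by
  unfold glauberPin
  have hswap : (∑ σ : Cfg n q, S.condMu U τ σ * ((n : ℝ)⁻¹ * ∑ y : Fin n,
        if y ∈ U then (if σ' = σ then 1 else 0)
        else S.condMu (({y} : Finset (Fin n))ᶜ) σ σ'))
      = (n : ℝ)⁻¹ * ∑ y : Fin n, ∑ σ : Cfg n q, S.condMu U τ σ *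
        (if y ∈ U then (if σ' = σ then 1 else 0)
         else S.condMu (({y} : Finset (Fin n))ᶜ) σ σ') := by
    have h1 : ∀ σ : Cfg n q, S.condMu U τ σ * ((n : ℝ)⁻¹ * ∑ y : Fin n,
        if y ∈ U then (if σ' = σ then 1 else 0)
        else S.condMu (({y} : Finset (Fin n))ᶜ) σ σ')
        = ∑ y : Fin n, (n : ℝ)⁻¹ * (S.condMu U τ σ *
          (if y ∈ U then (if σ' = σ then 1 else 0)
           else S.condMu (({y} : Finset (Fin n))ᶜ) σ σ')) := by
      intro σ
      rw [Finset.mul_sum, Finset.mul_sum]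
      exact Finset.sum_congr rfl fun y _ => by ring
    rw [Finset.sum_congr rfl fun σ _ => h1 σ, Finset.sum_comm, Finset.mul_sum]
    exact Finset.sum_congr rfl fun y _ => (Finset.mul_sum _ _ _).symm
  rw [hswap]
  have hinner : ∀ y : Fin n, (∑ σ : Cfg n q, S.condMu U τ σ *
      (if y ∈ U then (if σ' = σ then 1 else 0)
       else S.condMu (({y} : Finset (Fin n))ᶜ) σ σ')) = S.condMu U τ σ' := by
    intro y
    by_cases hy : y ∈ U
    · simp only [if_pos hy]
      have : ∀ σ : Cfg n q, S.condMu U τ σ * (if σ' = σ then 1 else 0)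
          = if σ' = σ then S.condMu U τ σ else 0 := by
        intro σ; split <;> simp
      rw [Finset.sum_congr rfl fun σ _ => this σ]
      rw [Finset.sum_ite_eq]
      simp
    · simp only [if_neg hy]
      exact S.heatbath_stationary hpin hy σ'
  rw [Finset.sum_congr rfl fun y _ => hinner y]
  rw [Finset.sum_const, Finset.card_univ, Fintype.card_fin, nsmul_eq_mul, ← mul_assoc,
    inv_mul_cancel₀ (by exact_mod_cast hn.ne' : (n : ℝ) ≠ 0), one_mul]

lemma wt_pos_of_margin_pos {U : Finset (Fin n)} {τ : Cfg n q} (hpin : S.IsPinning U τ)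
    {x : Fin n} {a : Fin q} (h : 0 < S.margin U τ x a) :
    ∃ σ : Cfg n q, σ x = a ∧ 0 < S.condWt U τ σ := by
  unfold margin at h
  have : ∃ σ : Cfg n q, (0 : ℝ) < (if σ x = a then S.condMu U τ σ else 0) := by
    by_contra hc
    push_neg at hc
    have : (∑ σ : Cfg n q, if σ x = a then S.condMu U τ σ else 0) ≤ 0 :=
      Finset.sum_nonpos fun σ _ => hc σ
    exact absurd h (not_lt.mpr this)
  obtain ⟨σ, hσ⟩ := this
  by_cases hxa : σ x = a
  · rw [if_pos hxa] at hσ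
    exact ⟨σ, hxa, S.condWt_pos_of_condMu_pos hσ⟩
  · rw [if_neg hxa] at hσ; exact absurd hσ (lt_irrefl 0)

lemma isPinning_insert {U : Finset (Fin n)} {τ : Cfg n q} (hpin : S.IsPinning U τ)
    {x : Fin n} (hx : x ∉ U) {a : Fin q} (h : 0 < S.margin U τ x a) :
    S.IsPinning (insert x U) (Function.update τ x a) := by
  obtain ⟨σ, hxa, hσ⟩ := S.wt_pos_of_margin_pos hpin h
  obtain ⟨hwσ, hag⟩ := S.wt_pos_of_condWt_pos hσ
  refine ⟨σ, hwσ, fun z hz => ?_⟩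
  rcases Finset.mem_insert.mp hz with hz | hz
  · subst hz; rw [Function.update_self]; exact hxa
  · have hzx : z ≠ x := fun hh => hx (hh ▸ hz)
    rw [Function.update_of_ne hzx]
    exact hag z hz

lemma condWt_insert_le {U : Finset (Fin n)} {τ : Cfg n q} {x : Fin n} (hx : x ∉ U)
    {a : Fin q} {Y : Cfg n q}
    (h : 0 < S.condWt (insert x U) (Function.update τ x a) Y) :
    0 < S.condWt U τ Y ∧ 0 < S.wt Y := by
  obtain ⟨hw, hag⟩ := S.wt_pos_of_condWt_pos h
  refine ⟨?_, hw⟩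
  unfold condWt
  rw [if_pos]
  · exact hw
  · intro z hz
    have hzx : z ≠ x := fun hh => hx (hh ▸ hz)
    have := hag z (Finset.mem_insert_of_mem hz)
    rwa [Function.update_of_ne hzx] at this

end SpinSystem

section DW
variable {n q : ℕ} (w : Fin n → ℝ)

lemma dW_nonneg (hw : ∀ x, 0 < w x) (σ τ : Cfg n q) : 0 ≤ dW w σ τ :=
  Finset.sum_nonneg fun z _ => by split; exacts [(hw z).le, le_rfl]

lemma dW_self (σ : Cfg n q) : dW w σ σ = 0 := by
  unfold dW; simp

lemma dW_triangle (hw : ∀ x, 0 < w x) (σ ρ τ : Cfg n q) :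
    dW w σ τ ≤ dW w σ ρ + dW w ρ τ := by
  unfold dW
  rw [← Finset.sum_add_distrib]
  refine Finset.sum_le_sum fun z _ => ?_
  by_cases h1 : σ z ≠ ρ z
  · rw [if_pos h1]
    have : (0:ℝ) ≤ if ρ z ≠ τ z then w z else 0 := by split; exacts [(hw z).le, le_rfl]
    split <;> linarith [(hw z).le]
  · push_neg at h1
    rw [h1]
    simp

lemma dW_le_total (hw : ∀ x, 0 < w x) (σ τ : Cfg n q) : dW w σ τ ≤ ∑ z, w z :=
  Finset.sum_le_sum fun z _ => by split; exacts [le_rfl, (hw z).le]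

lemma dW_le_single (hw : ∀ x, 0 < w x) {x : Fin n} {σ τ : Cfg n q}
    (h : ∀ z, z ≠ x → σ z = τ z) : dW w σ τ ≤ w x := by
  unfold dW
  have : (∑ z, if σ z ≠ τ z then w z else 0) ≤ ∑ z, if z = x then w x else 0 := by
    refine Finset.sum_le_sum fun z _ => ?_
    by_cases hz : z = x
    · subst hz
      rw [if_pos rfl]
      split; exacts [le_rfl, (hw z).le]
    · rw [if_neg hz, if_neg (by simp [h z hz])]
  refine this.trans ?_
  rw [Finset.sum_ite_eq' Finset.univ x (fun _ => w x)]
  simp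

end DW

end AuxSpin


section Perturb

namespace SpinSystem

variable {n q : ℕ} (S : SpinSystem n q)

/-- One step of the Glauber dynamics changes by at most `w x / n` in `dW`-Wasserstein
distance when the pinning is extended at the single site `x`. -/
lemma perturb_coupling (w : Fin n → ℝ) (hw : ∀ x, 0 < w x)
    {U : Finset (Fin n)} {x : Fin n} (hx : x ∉ U) {Y : Cfg n q} (hY : 0 < S.wt Y) :
    ∃ Q : Cfg n q × Cfg n q → ℝ,
      IsCoupling Q (S.glauberPin U Y) (S.glauberPin (insert x U) Y) ∧
      (∑ r : Cfg n q × Cfg n q, Q r * dW w r.1 r.2) ≤ w x / n := by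
  classical
  have hpinY : ∀ y : Fin n, S.IsPinning (({y} : Finset (Fin n))ᶜ) Y :=
    fun y => ⟨Y, hY, fun _ _ => rfl⟩
  have hprob : ∀ y : Fin n, ∑ σ : Cfg n q, S.condMu (({y} : Finset (Fin n))ᶜ) Y σ = 1 :=
    fun y => S.condMu_sum (hpinY y)
  set C : Fin n → Cfg n q × Cfg n q → ℝ := fun y r =>
    if y ∈ U then (if r.1 = Y ∧ r.2 = Y then 1 else 0)
    else if y = x then S.condMu (({y} : Finset (Fin n))ᶜ) Y r.1 * (if r.2 = Y then 1 else 0)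
    else S.condMu (({y} : Finset (Fin n))ᶜ) Y r.1 * (if r.2 = r.1 then 1 else 0)
    with hC
  have hC0 : ∀ y r, 0 ≤ C y r := by
    intro y r
    rw [hC]
    dsimp only
    split
    · split; exacts [zero_le_one, le_rfl]
    · split <;>
      · refine mul_nonneg (S.condMu_nonneg _ _ _) ?_
        split; exacts [zero_le_one, le_rfl]
  have hC1 : ∀ y σ', (∑ σ'' : Cfg n q, C y (σ', σ''))
      = if y ∈ U then (if σ' = Y then 1 else 0)
        else S.condMu (({y} : Finset (Fin n))ᶜ) Y σ' := by
    intro y σ'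
    rw [hC]
    dsimp only
    by_cases hyU : y ∈ U
    · simp only [if_pos hyU]
      by_cases h1 : σ' = Y
      · simp [h1]
      · simp [h1]
    · simp only [if_neg hyU]
      by_cases hyx : y = x
      · simp only [if_pos hyx]
        rw [← Finset.mul_sum]
        simp
      · simp only [if_neg hyx]
        rw [← Finset.mul_sum]
        simp
  have hC2 : ∀ y σ'', (∑ σ' : Cfg n q, C y (σ', σ''))
      = if y ∈ insert x U then (if σ'' = Y then 1 else 0)
        else S.condMu (({y} : Finset (Fin n))ᶜ) Y σ'' := by
    intro y σ''
    rw [hC]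
    dsimp only
    by_cases hyU : y ∈ U
    · have hyI : y ∈ insert x U := Finset.mem_insert_of_mem hyU
      simp only [if_pos hyU, if_pos hyI]
      by_cases h2 : σ'' = Y
      · simp [h2]
      · simp [h2]
    · simp only [if_neg hyU]
      by_cases hyx : y = x
      · have hyI : y ∈ insert x U := by rw [hyx]; exact Finset.mem_insert_self x U
        simp only [if_pos hyx, if_pos hyI]
        by_cases h2 : σ'' = Y
        · simp [h2, hprob y]
        · simp [h2]
      · have hyI : y ∉ insert x U := by
          rw [Finset.mem_insert]; push_neg; exact ⟨hyx, hyU⟩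
        simp only [if_neg hyx, if_neg hyI]
        calc (∑ σ' : Cfg n q, S.condMu (({y} : Finset (Fin n))ᶜ) Y σ' *
                if σ'' = σ' then 1 else 0)
            = ∑ σ' : Cfg n q, if σ'' = σ' then S.condMu (({y} : Finset (Fin n))ᶜ) Y σ' else 0 :=
              Finset.sum_congr rfl fun σ' _ => by split <;> simp
          _ = S.condMu (({y} : Finset (Fin n))ᶜ) Y σ'' := by
              rw [Finset.sum_ite_eq]; simp
  refine ⟨fun r => (n : ℝ)⁻¹ * ∑ y : Fin n, C y r, ⟨?_, ?_, ?_⟩, ?_⟩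
  · intro r
    exact mul_nonneg (by positivity) (Finset.sum_nonneg fun y _ => hC0 y r)
  · intro σ'
    rw [← Finset.mul_sum, Finset.sum_comm]
    rw [Finset.sum_congr rfl fun y _ => hC1 y σ']
    rfl
  · intro σ''
    rw [← Finset.mul_sum, Finset.sum_comm]
    rw [Finset.sum_congr rfl fun y _ => hC2 y σ'']
    rfl
  · have hexp : (∑ r : Cfg n q × Cfg n q, ((n : ℝ)⁻¹ * ∑ y : Fin n, C y r) * dW w r.1 r.2)
        = (n : ℝ)⁻¹ * ∑ y : Fin n, ∑ r : Cfg n q × Cfg n q, C y r * dW w r.1 r.2 := by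
      have h1 : ∀ r : Cfg n q × Cfg n q, ((n : ℝ)⁻¹ * ∑ y : Fin n, C y r) * dW w r.1 r.2
          = ∑ y : Fin n, (n : ℝ)⁻¹ * (C y r * dW w r.1 r.2) := by
        intro r
        rw [mul_assoc, Finset.sum_mul, Finset.mul_sum]
      rw [Finset.sum_congr rfl fun r _ => h1 r, Finset.sum_comm, Finset.mul_sum]
      exact Finset.sum_congr rfl fun y _ => (Finset.mul_sum _ _ _).symm
    rw [hexp]
    have hEy : ∀ y : Fin n, (∑ r : Cfg n q × Cfg n q, C y r * dW w r.1 r.2)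
        ≤ if y = x then w x else 0 := by
      intro y
      by_cases hyU : y ∈ U
      · have hyx : y ≠ x := fun h => hx (h ▸ hyU)
        rw [if_neg hyx]
        refine le_of_eq (Finset.sum_eq_zero fun r _ => ?_)
        rw [hC]
        dsimp only
        rw [if_pos hyU]
        rcases r with ⟨r1, r2⟩
        by_cases h12 : r1 = Y ∧ r2 = Y
        · obtain ⟨rfl, rfl⟩ := h12
          simp [dW_self]
        · rw [if_neg h12, zero_mul]
      · by_cases hyx : y = x
        · subst hyx
          rw [if_pos rfl]
          calc (∑ r : Cfg n q × Cfg n q, C y r * dW w r.1 r.2)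
              = ∑ σ' : Cfg n q, ∑ σ'' : Cfg n q, C y (σ', σ'') * dW w σ' σ'' := by
                rw [Fintype.sum_prod_type]
            _ = ∑ σ' : Cfg n q, S.condMu (({y} : Finset (Fin n))ᶜ) Y σ' * dW w σ' Y := by
                refine Finset.sum_congr rfl fun σ' _ => ?_
                have hterm : ∀ σ'' : Cfg n q, C y (σ', σ'') * dW w σ' σ''
                    = if σ'' = Y then S.condMu (({y} : Finset (Fin n))ᶜ) Y σ' * dW w σ' Y
                      else 0 := by
                  intro σ''
                  rw [hC]
                  dsimp only
                  rw [if_neg hyU, if_pos rfl]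
                  by_cases h2 : σ'' = Y
                  · subst h2; simp
                  · simp [h2]
                rw [Finset.sum_congr rfl fun σ'' _ => hterm σ'']
                rw [Finset.sum_ite_eq' Finset.univ Y
                  (fun _ => S.condMu (({y} : Finset (Fin n))ᶜ) Y σ' * dW w σ' Y)]
                simp
            _ ≤ ∑ σ' : Cfg n q, S.condMu (({y} : Finset (Fin n))ᶜ) Y σ' * w y := by
                refine Finset.sum_le_sum fun σ' _ => ?_
                rcases (S.condMu_nonneg (({y} : Finset (Fin n))ᶜ) Y σ').eq_or_lt with h | h
                · rw [← h, zero_mul, zero_mul]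
                · refine mul_le_mul_of_nonneg_left ?_ h.le
                  obtain ⟨-, hag⟩ := S.wt_pos_of_condWt_pos (S.condWt_pos_of_condMu_pos h)
                  exact dW_le_single w hw fun z hz =>
                    hag z (by simpa [Finset.mem_compl] using hz)
            _ = w y := by rw [← Finset.sum_mul, hprob y, one_mul]
        · rw [if_neg hyx]
          refine le_of_eq (Finset.sum_eq_zero fun r _ => ?_)
          rw [hC]
          dsimp only
          rw [if_neg hyU, if_neg hyx]
          rcases r with ⟨r1, r2⟩
          by_cases h2 : r2 = r1
          · subst h2; simp [dW_self]
          · simp [h2]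
    have hsum : (∑ y : Fin n, ∑ r : Cfg n q × Cfg n q, C y r * dW w r.1 r.2) ≤ w x := by
      refine (Finset.sum_le_sum fun y _ => hEy y).trans (le_of_eq ?_)
      rw [Finset.sum_ite_eq' Finset.univ x (fun _ => w x)]
      simp
    calc (n : ℝ)⁻¹ * ∑ y : Fin n, ∑ r : Cfg n q × Cfg n q, C y r * dW w r.1 r.2
        ≤ (n : ℝ)⁻¹ * w x := mul_le_mul_of_nonneg_left hsum (by positivity)
      _ = w x / n := by rw [div_eq_mul_inv, mul_comm]

end SpinSystem

end Perturb


section Iterate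

namespace SpinSystem

variable {n q : ℕ} (S : SpinSystem n q)

lemma exists_coupling_iter (w : Fin n → ℝ) (hw : ∀ x, 0 < w x)
    (κ : ℝ) (hκ0 : 0 ≤ κ) (hκ1 : κ < 1)
    (hcon : ContractiveFam S (fun U _ => S.glauberPin U) (dW w) κ)
    (hn : 0 < n) {U : Finset (Fin n)} {τ : Cfg n q} {x : Fin n} {a : Fin q}
    (hpin : S.IsPinning U τ) (hx : x ∉ U) (ha : 0 < S.margin U τ x a) :
    ∀ t : ℕ, ∃ π : Cfg n q × Cfg n q → ℝ,
      IsCoupling π (S.condMu U τ) (S.condMu (insert x U) (Function.update τ x a)) ∧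
      (∑ p : Cfg n q × Cfg n q, π p * dW w p.1 p.2)
        ≤ κ ^ t * (∑ z, w z) + (w x / n) / (1 - κ) := by
  classical
  have h1κ : 0 < 1 - κ := by linarith
  set U' := insert x U with hU'
  set τ' := Function.update τ x a with hτ'
  have hpin' : S.IsPinning U' τ' := S.isPinning_insert hpin hx ha
  have hμ := S.condMu_sum hpin
  have hμ' := S.condMu_sum hpin'
  set M := ∑ z, w z with hM
  have hC0 : 0 ≤ (w x / n) / (1 - κ) :=
    div_nonneg (div_nonneg (hw x).le (Nat.cast_nonneg n)) h1κ.le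
  intro t
  induction t with
  | zero =>
    refine ⟨fun p => S.condMu U τ p.1 * S.condMu U' τ' p.2, ⟨?_, ?_, ?_⟩, ?_⟩
    · exact fun p => mul_nonneg (S.condMu_nonneg _ _ _) (S.condMu_nonneg _ _ _)
    · intro s
      dsimp only
      rw [← Finset.mul_sum, hμ', mul_one]
    · intro s'
      dsimp only
      rw [← Finset.sum_mul, hμ, one_mul]
    · dsimp only
      have hE : (∑ p : Cfg n q × Cfg n q,
          S.condMu U τ p.1 * S.condMu U' τ' p.2 * dW w p.1 p.2)
          ≤ ∑ p : Cfg n q × Cfg n q, S.condMu U τ p.1 * S.condMu U' τ' p.2 * M := by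
        refine Finset.sum_le_sum fun p _ => ?_
        exact mul_le_mul_of_nonneg_left (dW_le_total w hw p.1 p.2)
          (mul_nonneg (S.condMu_nonneg _ _ _) (S.condMu_nonneg _ _ _))
      have hone : (∑ p : Cfg n q × Cfg n q, S.condMu U τ p.1 * S.condMu U' τ' p.2 * M) = M := by
        rw [← Finset.sum_mul]
        rw [Fintype.sum_prod_type]
        have : ∀ s : Cfg n q, (∑ s' : Cfg n q, S.condMu U τ s * S.condMu U' τ' s') =
            S.condMu U τ s := by
          intro s
          rw [← Finset.mul_sum, hμ', mul_one]
        rw [Finset.sum_congr rfl fun s _ => this s, hμ, one_mul]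
      rw [pow_zero, one_mul]
      refine (hE.trans (le_of_eq hone)).trans ?_
      linarith
  | succ t ih =>
    obtain ⟨πt, hcoup, hE⟩ := ih
    have hsum1 : (∑ p : Cfg n q × Cfg n q, πt p) = 1 := by
      rw [Fintype.sum_prod_type]
      calc (∑ s : Cfg n q, ∑ s' : Cfg n q, πt (s, s')) = ∑ s : Cfg n q, S.condMu U τ s :=
            Finset.sum_congr rfl fun s _ => hcoup.2.1 s
        _ = 1 := hμ
    have hstep := coupling_step (dW w) (S.condMu U τ) (S.condMu U' τ')
      (S.glauberPin U) (S.glauberPin U')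
      (S.glauber_stationary hn hpin) (S.glauber_stationary hn hpin') πt hcoup
      (fun p => κ * dW w p.1 p.2 + w x / n) ?_
    · obtain ⟨π', hcoup', hE'⟩ := hstep
      refine ⟨π', hcoup', ?_⟩
      have hcsum : (∑ p : Cfg n q × Cfg n q, πt p * (κ * dW w p.1 p.2 + w x / n))
          = κ * (∑ p : Cfg n q × Cfg n q, πt p * dW w p.1 p.2) + w x / n := by
        have : ∀ p : Cfg n q × Cfg n q, πt p * (κ * dW w p.1 p.2 + w x / n)
            = κ * (πt p * dW w p.1 p.2) + (w x / n) * πt p := fun p => by ring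
        rw [Finset.sum_congr rfl fun p _ => this p, Finset.sum_add_distrib,
          ← Finset.mul_sum, ← Finset.mul_sum, hsum1, mul_one]
      rw [hcsum] at hE'
      have hmono : κ * (∑ p : Cfg n q × Cfg n q, πt p * dW w p.1 p.2) + w x / n
          ≤ κ * (κ ^ t * M + (w x / n) / (1 - κ)) + w x / n := by
        have := mul_le_mul_of_nonneg_left hE hκ0
        linarith
      have hid : κ * (κ ^ t * M + (w x / n) / (1 - κ)) + w x / n
          = κ ^ (t + 1) * M + (w x / n) / (1 - κ) := by
        field_simp
        ring
      exact hE'.trans (hmono.trans (le_of_eq hid))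
    · intro p hp
      have hX : 0 < S.condMu U τ p.1 := by
        have h := coupling_le_left hcoup p.1 p.2
        rw [Prod.mk.eta] at h
        exact lt_of_lt_of_le hp h
      have hY : 0 < S.condMu U' τ' p.2 := by
        have h := coupling_le_right hcoup p.1 p.2
        rw [Prod.mk.eta] at h
        exact lt_of_lt_of_le hp h
      have hXw : 0 < S.condWt U τ p.1 := S.condWt_pos_of_condMu_pos hX
      have hYw' : 0 < S.condWt U' τ' p.2 := S.condWt_pos_of_condMu_pos hY
      obtain ⟨hYU, hYwt⟩ := S.condWt_insert_le hx hYw'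
      obtain ⟨Q1, hQ1c, hQ1E⟩ := hcon U τ hpin p.1 p.2 hXw hYU
      obtain ⟨Q2, hQ2c, hQ2E⟩ := S.perturb_coupling w hw hx hYwt
      obtain ⟨K, hKc, hKE⟩ := glueCoupling (dW w) (dW_nonneg w hw) (dW_triangle w hw)
        _ _ _ Q1 Q2 hQ1c hQ2c
      exact ⟨K, hKc, hKE.trans (by linarith)⟩

end SpinSystem

end Iterate


section RowBound

namespace SpinSystem

variable {n q : ℕ} (S : SpinSystem n q)

lemma row_bound (w : Fin n → ℝ) (hw : ∀ x, 0 < w x)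
    (κ : ℝ) (hκ0 : 0 ≤ κ) (hκ1 : κ < 1)
    (hcon : ContractiveFam S (fun U _ => S.glauberPin U) (dW w) κ)
    (hn : 0 < n) {U : Finset (Fin n)} {τ : Cfg n q} {x : Fin n} {a : Fin q}
    (hpin : S.IsPinning U τ) (hx : x ∉ U) (ha : 0 < S.margin U τ x a) :
    (∑ p' : Fin n × Fin q, |S.Jmat U τ (x, a) p'| * w p'.1)
      ≤ 2 / ((1 - κ) * n) * w x := by
  classical
  have h1κ : 0 < 1 - κ := by linarith
  have hn' : (0 : ℝ) < n := by exact_mod_cast hn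
  set U' := insert x U with hU'
  set τ' := Function.update τ x a with hτ'
  set M := ∑ z, w z with hM
  set R := ∑ p' : Fin n × Fin q, |S.Jmat U τ (x, a) p'| * w p'.1 with hR
  -- Step 1 : the row sum is controlled by any coupling of the two conditional measures
  have hcoupling_bound : ∀ π : Cfg n q × Cfg n q → ℝ,
      IsCoupling π (S.condMu U τ) (S.condMu U' τ') →
      R ≤ 2 * ∑ p : Cfg n q × Cfg n q, π p * dW w p.1 p.2 := by
    intro π hπ
    have hmargin1 : ∀ (y : Fin n) (b : Fin q), S.margin U τ y b
        = ∑ p : Cfg n q × Cfg n q, π p * (if p.1 y = b then 1 else 0) := by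
      intro y b
      rw [Fintype.sum_prod_type]
      unfold margin
      refine Finset.sum_congr rfl fun s _ => ?_
      have h0 : ∀ s' : Cfg n q, π (s, s') * (if (s, s').1 y = b then (1:ℝ) else 0)
          = π (s, s') * (if s y = b then 1 else 0) := fun s' => rfl
      rw [Finset.sum_congr rfl fun s' _ => h0 s', ← Finset.sum_mul, hπ.2.1 s]
      split <;> simp
    have hmargin2 : ∀ (y : Fin n) (b : Fin q), S.margin U' τ' y b
        = ∑ p : Cfg n q × Cfg n q, π p * (if p.2 y = b then 1 else 0) := by
      intro y b
      rw [Fintype.sum_prod_type, Finset.sum_comm]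
      unfold margin
      refine Finset.sum_congr rfl fun s' _ => ?_
      have h0 : ∀ s : Cfg n q, π (s, s') * (if (s, s').2 y = b then (1:ℝ) else 0)
          = π (s, s') * (if s' y = b then 1 else 0) := fun s => rfl
      rw [Finset.sum_congr rfl fun s _ => h0 s, ← Finset.sum_mul, hπ.2.2 s']
      split <;> simp
    -- pointwise bound on J entries
    have hJ : ∀ p' : Fin n × Fin q, |S.Jmat U τ (x, a) p'|
        ≤ |S.margin U τ p'.1 p'.2 - S.margin U' τ' p'.1 p'.2| := by
      intro p'
      unfold Jmat
      dsimp only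
      split
      · simp [abs_nonneg]
      · split
        · rw [abs_sub_comm]
        · simp [abs_nonneg]
    have hdiff : ∀ (y : Fin n) (b : Fin q),
        |S.margin U τ y b - S.margin U' τ' y b|
        ≤ ∑ p : Cfg n q × Cfg n q, π p *
            |(if p.1 y = b then (1:ℝ) else 0) - (if p.2 y = b then 1 else 0)| := by
      intro y b
      rw [hmargin1 y b, hmargin2 y b, ← Finset.sum_sub_distrib]
      refine (Finset.abs_sum_le_sum_abs _ _).trans (le_of_eq ?_)
      refine Finset.sum_congr rfl fun p _ => ?_
      rw [← mul_sub, abs_mul, abs_of_nonneg (hπ.1 p)]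
    have hsumb : ∀ (p : Cfg n q × Cfg n q) (y : Fin n),
        (∑ b : Fin q, |(if p.1 y = b then (1:ℝ) else 0) - (if p.2 y = b then 1 else 0)|)
        = if p.1 y = p.2 y then 0 else 2 := by
      intro p y
      by_cases h12 : p.1 y = p.2 y
      · rw [if_pos h12]
        refine Finset.sum_eq_zero fun b _ => ?_
        rw [h12]
        simp
      · rw [if_neg h12]
        have : ∀ b : Fin q, |(if p.1 y = b then (1:ℝ) else 0) - (if p.2 y = b then 1 else 0)|
            = (if p.1 y = b then (1:ℝ) else 0) + (if p.2 y = b then 1 else 0) := by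
          intro b
          by_cases h1 : p.1 y = b
          · have h2 : ¬ p.2 y = b := fun h2 => h12 (h1.trans h2.symm)
            rw [if_pos h1, if_neg h2]
            norm_num
          · rw [if_neg h1]
            split <;> norm_num
        rw [Finset.sum_congr rfl fun b _ => this b, Finset.sum_add_distrib]
        have e1 : (∑ b : Fin q, if p.1 y = b then (1:ℝ) else 0) = 1 := by
          rw [Finset.sum_ite_eq]; simp
        have e2 : (∑ b : Fin q, if p.2 y = b then (1:ℝ) else 0) = 1 := by
          rw [Finset.sum_ite_eq]; simp
        rw [e1, e2]
        norm_num
    -- assemble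
    have hA : R ≤ ∑ y : Fin n, (∑ b : Fin q, |S.margin U τ y b - S.margin U' τ' y b|) * w y := by
      rw [hR, Fintype.sum_prod_type]
      refine Finset.sum_le_sum fun y _ => ?_
      rw [Finset.sum_mul]
      refine Finset.sum_le_sum fun b _ => ?_
      exact mul_le_mul_of_nonneg_right (hJ (y, b)) (hw y).le
    refine hA.trans ?_
    have hB : ∀ y : Fin n, (∑ b : Fin q, |S.margin U τ y b - S.margin U' τ' y b|) * w y
        ≤ (∑ p : Cfg n q × Cfg n q, π p * (if p.1 y = p.2 y then 0 else 2)) * w y := by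
      intro y
      refine mul_le_mul_of_nonneg_right ?_ (hw y).le
      calc (∑ b : Fin q, |S.margin U τ y b - S.margin U' τ' y b|)
          ≤ ∑ b : Fin q, ∑ p : Cfg n q × Cfg n q, π p *
              |(if p.1 y = b then (1:ℝ) else 0) - (if p.2 y = b then 1 else 0)| :=
            Finset.sum_le_sum fun b _ => hdiff y b
        _ = ∑ p : Cfg n q × Cfg n q, π p * (if p.1 y = p.2 y then 0 else 2) := by
            rw [Finset.sum_comm]
            refine Finset.sum_congr rfl fun p _ => ?_
            rw [← Finset.mul_sum, hsumb p y]
    refine (Finset.sum_le_sum fun y _ => hB y).trans (le_of_eq ?_)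
    have hswap : (∑ y : Fin n, (∑ p : Cfg n q × Cfg n q,
          π p * (if p.1 y = p.2 y then 0 else 2)) * w y)
        = ∑ p : Cfg n q × Cfg n q, π p * ∑ y : Fin n,
            (if p.1 y = p.2 y then 0 else 2) * w y := by
      have h1 : ∀ y : Fin n, (∑ p : Cfg n q × Cfg n q,
            π p * (if p.1 y = p.2 y then 0 else 2)) * w y
          = ∑ p : Cfg n q × Cfg n q, π p * ((if p.1 y = p.2 y then 0 else 2) * w y) := by
        intro y
        rw [Finset.sum_mul]
        exact Finset.sum_congr rfl fun p _ => by ring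
      rw [Finset.sum_congr rfl fun y _ => h1 y, Finset.sum_comm]
      exact Finset.sum_congr rfl fun p _ => (Finset.mul_sum _ _ _).symm
    rw [hswap, Finset.mul_sum]
    refine Finset.sum_congr rfl fun p _ => ?_
    have : (∑ y : Fin n, (if p.1 y = p.2 y then (0:ℝ) else 2) * w y) = 2 * dW w p.1 p.2 := by
      unfold dW
      rw [Finset.mul_sum]
      refine Finset.sum_congr rfl fun y _ => ?_
      by_cases hy : p.1 y = p.2 y
      · rw [if_pos hy, if_neg (by simpa using hy)]
        ring
      · rw [if_neg hy, if_pos hy]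
    rw [this]
    ring
  -- Step 2 : apply the iterated couplings and take the limit
  have hiter := S.exists_coupling_iter w hw κ hκ0 hκ1 hcon hn hpin hx ha
  have hRt : ∀ t : ℕ, R ≤ 2 * (κ ^ t * M + (w x / n) / (1 - κ)) := by
    intro t
    obtain ⟨π, hπ, hE⟩ := hiter t
    refine (hcoupling_bound π hπ).trans ?_
    linarith
  have htend : Filter.Tendsto (fun t : ℕ => 2 * (κ ^ t * M + (w x / n) / (1 - κ)))
      Filter.atTop (nhds (2 * (0 * M + (w x / n) / (1 - κ)))) := by
    refine Filter.Tendsto.const_mul 2 ?_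
    exact ((tendsto_pow_atTop_nhds_zero_of_lt_one hκ0 hκ1).mul_const M).add_const _
  have hlim : R ≤ 2 * (0 * M + (w x / n) / (1 - κ)) := ge_of_tendsto' htend hRt
  refine hlim.trans (le_of_eq ?_)
  rw [zero_mul, zero_add, div_div, mul_comm (n : ℝ) (1 - κ), div_mul_eq_mul_div,
    ← mul_div_assoc]

end SpinSystem

end RowBound

/-- contraction of the Glauber dynamics with respect to a weighted Hamming
metric implies spectral independence with constant `2/((1-κ)n)`. -/
theorem glauber_contraction_wHamming_implies_SI
    {n q : ℕ} (S : SpinSystem n q) (hTC : S.TotallyConnected)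
    (w : Fin n → ℝ) (hw : ∀ x, 0 < w x)
    (κ : ℝ) (hκ0 : 0 < κ) (hκ1 : κ < 1)
    (hcon : ContractiveFam S (fun U _ => S.glauberPin U) (dW w) κ) :
    S.SpectrallyIndependent (2 / ((1 - κ) * n)) ∧
      ∀ ε : ℝ, 0 < ε → κ ≤ 1 - ε / n → S.SpectrallyIndependent (2 / ε) := by
  have main : S.SpectrallyIndependent (2 / ((1 - κ) * n)) := by
    intro U τ hpin t φ hsupp hφ heig
    obtain ⟨p₀, hp₀⟩ := Function.ne_iff.mp hφ
    have hn : 0 < n := p₀.1.pos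
    obtain ⟨ps, -, hmax⟩ := Finset.exists_max_image (Finset.univ : Finset (Fin n × Fin q))
      (fun p => |φ p| / w p.1) ⟨p₀, Finset.mem_univ p₀⟩
    set m := |φ ps| / w ps.1 with hm
    have hmpos : 0 < m :=
      lt_of_lt_of_le (div_pos (abs_pos.mpr hp₀) (hw p₀.1)) (hmax p₀ (Finset.mem_univ p₀))
    have hφps : φ ps ≠ 0 := by
      intro h
      have : m = 0 := by rw [hm, h]; simp
      rw [this] at hmpos
      exact lt_irrefl 0 hmpos
    have hall : S.allowed U τ ps.1 ps.2 := by
      by_contra hcon'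
      exact hφps (hsupp ps hcon')
    have hrow := S.row_bound w hw κ hκ0.le hκ1 hcon hn hpin hall.1 hall.2
    rw [Prod.mk.eta] at hrow
    have hbound : ∀ p' : Fin n × Fin q, |φ p'| ≤ m * w p'.1 := fun p' =>
      (div_le_iff₀ (hw p'.1)).mp (hmax p' (Finset.mem_univ p'))
    have h1 : |t| * |φ ps| ≤ m * (2 / ((1 - κ) * n) * w ps.1) := by
      calc |t| * |φ ps| = |t * φ ps| := (abs_mul t (φ ps)).symm
        _ = |∑ p' : Fin n × Fin q, S.Jmat U τ ps p' * φ p'| := by rw [heig ps]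
        _ ≤ ∑ p' : Fin n × Fin q, |S.Jmat U τ ps p' * φ p'| := Finset.abs_sum_le_sum_abs _ _
        _ = ∑ p' : Fin n × Fin q, |S.Jmat U τ ps p'| * |φ p'| :=
            Finset.sum_congr rfl fun p' _ => abs_mul _ _
        _ ≤ ∑ p' : Fin n × Fin q, |S.Jmat U τ ps p'| * (m * w p'.1) :=
            Finset.sum_le_sum fun p' _ =>
              mul_le_mul_of_nonneg_left (hbound p') (abs_nonneg _)
        _ = m * ∑ p' : Fin n × Fin q, |S.Jmat U τ ps p'| * w p'.1 := by
            rw [Finset.mul_sum]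
            exact Finset.sum_congr rfl fun p' _ => by ring
        _ ≤ m * (2 / ((1 - κ) * n) * w ps.1) :=
            mul_le_mul_of_nonneg_left hrow hmpos.le
    have hmw : m * w ps.1 = |φ ps| := div_mul_cancel₀ _ (hw ps.1).ne'
    have h2 : m * (2 / ((1 - κ) * n) * w ps.1) = 2 / ((1 - κ) * n) * |φ ps| := by
      calc m * (2 / ((1 - κ) * n) * w ps.1) = 2 / ((1 - κ) * n) * (m * w ps.1) := by ring
        _ = 2 / ((1 - κ) * n) * |φ ps| := by rw [hmw]
    have hφa : 0 < |φ ps| := abs_pos.mpr hφps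
    rw [h2] at h1
    have habs : |t| ≤ 2 / ((1 - κ) * n) := le_of_mul_le_mul_right h1 hφa
    exact (le_abs_self t).trans habs
  refine ⟨main, ?_⟩
  intro ε hε hκε U τ hpin t φ hsupp hφ heig
  have ht := main U τ hpin t φ hsupp hφ heig
  obtain ⟨p₀, -⟩ := Function.ne_iff.mp hφ
  have hn : 0 < n := p₀.1.pos
  have hn' : (0 : ℝ) < n := by exact_mod_cast hn
  have hεn : ε / n ≤ 1 - κ := by linarith
  have hεle : ε ≤ (1 - κ) * n := by
    calc ε = ε / n * n := by field_simp
      _ ≤ (1 - κ) * n := mul_le_mul_of_nonneg_right hεn hn'.le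
  refine ht.trans ?_
  exact div_le_div_of_nonneg_left (by norm_num) hε hεle
end
end

section
/- Let μ be the Gibbs distribution of a totally-connected q-state spin system on a finite graph G, and let V = V_1 ∪ … ∪ V_k be a partition of the vertex set into independent sets of G. If μ satisfies k-partite factorization of entropy with constant C (with respect to this partition), then μ satisfies general block factorization of entropy with constant C·k. -/
open scoped BigOperators
open Classical
noncomputable section

/-! ### Auxiliary development for STATEMENT 10 -/

namespace KPFGBF

variable {Ω : Type*} [Fintype Ω]

/-- sub-probability: either a probability vector or identically zero. -/
def SubP (π : Ω → ℝ) : Prop := (∀ s, 0 ≤ π s) ∧ ((∑ s, π s) = 1 ∨ ∀ s, π s = 0)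

lemma expec_nonneg {π f : Ω → ℝ} (hπ : ∀ s, 0 ≤ π s) (hf : ∀ s, 0 ≤ f s) : 0 ≤ expec π f :=
  Finset.sum_nonneg fun s _ => mul_nonneg (hπ s) (hf s)

lemma expec_congr {π f g : Ω → ℝ} (h : ∀ s, π s ≠ 0 → f s = g s) : expec π f = expec π g := by
  unfold expec
  refine Finset.sum_congr rfl fun s _ => ?_
  by_cases hs : π s = 0
  · simp [hs]
  · rw [h s hs]

lemma ent_congr {π f g : Ω → ℝ} (h : ∀ s, π s ≠ 0 → f s = g s) : entOf π f = entOf π g := by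
  unfold entOf
  rw [expec_congr h, expec_congr (g := fun s => g s * Real.log (g s)) (fun s hs => by rw [h s hs])]

lemma ent_of_zero {π f : Ω → ℝ} (h : ∀ s, π s = 0) : entOf π f = 0 := by
  simp [entOf, expec, h]

lemma ent_const {π : Ω → ℝ} (h : (∑ s, π s) = 1 ∨ ∀ s, π s = 0) (c : ℝ) :
    entOf π (fun _ => c) = 0 := by
  rcases h with h | h
  · have h1 : ∀ d : ℝ, expec π (fun _ => d) = d := by
      intro d; unfold expec; rw [← Finset.sum_mul, h, one_mul]
    simp only [entOf, h1]
    ring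
  · exact ent_of_zero h

/-- if `expec π f = 0` with everything nonneg, the entropy is `0`. -/
lemma ent_of_expec_zero {π f : Ω → ℝ} (hπ : ∀ s, 0 ≤ π s) (hf : ∀ s, 0 ≤ f s)
    (h : expec π f = 0) : entOf π f = 0 := by
  have hz : ∀ s ∈ Finset.univ, π s * f s = 0 := by
    rw [← Finset.sum_eq_zero_iff_of_nonneg (fun s _ => mul_nonneg (hπ s) (hf s))]
    exact h
  have hz2 : ∀ s ∈ Finset.univ, π s * (f s * Real.log (f s)) = 0 := by
    intro s hs
    rcases mul_eq_zero.mp (hz s hs) with h0 | h0 <;> simp [h0]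
  have h2 : expec π (fun s => f s * Real.log (f s)) = 0 := Finset.sum_eq_zero hz2
  rw [entOf, h2, h]
  simp

lemma ent_nonneg {π f : Ω → ℝ} (hπ : SubP π) (hf : ∀ s, 0 ≤ f s) : 0 ≤ entOf π f := by
  obtain ⟨hπ0, hπ1 | hπ1⟩ := hπ
  swap
  · rw [ent_of_zero hπ1]
  set F := expec π f with hF
  rcases eq_or_lt_of_le (expec_nonneg hπ0 hf) with hF0 | hFpos
  · rw [ent_of_expec_zero hπ0 hf hF0.symm]
  -- pointwise : π s * (f s * log (f s / F)) ≥ π s * (f s - F)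
  have key : ∀ s, π s * (f s - F) ≤ π s * (f s * Real.log (f s / F)) := by
    intro s
    refine mul_le_mul_of_nonneg_left ?_ (hπ0 s)
    rcases eq_or_lt_of_le (hf s) with h0 | h0
    · rw [← h0]; simp [hFpos.le]; exact hFpos.le
    · have hlog : Real.log (F / f s) ≤ F / f s - 1 :=
        Real.log_le_sub_one_of_pos (by positivity)
      rw [Real.log_div (ne_of_gt hFpos) (ne_of_gt h0)] at hlog
      have h2 := mul_le_mul_of_nonneg_left hlog h0.le
      have hc : f s * (F / f s - 1) = F - f s := by field_simp
      rw [Real.log_div (ne_of_gt h0) (ne_of_gt hFpos)]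
      nlinarith
  have hsum : ∑ s, π s * (f s - F) = 0 := by
    have e1 : ∑ s, π s * (f s - F) = ∑ s, (π s * f s - F * π s) :=
      Finset.sum_congr rfl fun s _ => by ring
    rw [e1, Finset.sum_sub_distrib, ← Finset.mul_sum, hπ1]
    simp [expec, hF]
  have hid : ∑ s, π s * (f s * Real.log (f s / F)) =
      expec π (fun s => f s * Real.log (f s)) - F * Real.log F := by
    have : ∀ s, π s * (f s * Real.log (f s / F)) =
        π s * (f s * Real.log (f s)) - Real.log F * (π s * f s) := by
      intro s
      rcases eq_or_lt_of_le (hf s) with h0 | h0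
      · rw [← h0]; ring
      · rw [Real.log_div (ne_of_gt h0) (ne_of_gt hFpos)]; ring
    rw [Finset.sum_congr rfl fun s _ => this s, Finset.sum_sub_distrib, ← Finset.mul_sum]
    simp only [hF, expec]
    ring
  have := Finset.sum_le_sum (fun s (_ : s ∈ Finset.univ) => key s)
  rw [hsum, hid] at this
  unfold entOf
  linarith


/-- pointwise identity `h * log (h / c) = h * log h - h * log c` valid also at `h = 0`. -/
lemma mul_log_div_eq {h c : ℝ} (hh : 0 ≤ h) (hc : 0 < c) :
    h * Real.log (h / c) = h * Real.log h - h * Real.log c := by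
  rcases eq_or_lt_of_le hh with h0 | h0
  · rw [← h0]; ring
  · rw [Real.log_div (ne_of_gt h0) (ne_of_gt hc)]; ring

/-- variational upper bound: `π[h * log (H / π[H])] ≤ Ent_π(h)`. -/
lemma ent_variational {π h H : Ω → ℝ} (hπ0 : ∀ s, 0 ≤ π s) (hπ1 : ∑ s, π s = 1)
    (hh : ∀ s, 0 ≤ h s) (hH : ∀ s, 0 ≤ H s) (hHpos : 0 < expec π H)
    (hsupp : ∀ s, π s ≠ 0 → H s = 0 → h s = 0) :
    (∑ s, π s * (h s * Real.log (H s / expec π H))) ≤ entOf π h := by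
  set Hb := expec π H with hHb
  set hb := expec π h with hhb
  rcases eq_or_lt_of_le (expec_nonneg hπ0 hh) with hb0 | hbpos
  · -- `π s * h s = 0` everywhere
    have hz : ∀ s ∈ Finset.univ, π s * h s = 0 := by
      rw [← Finset.sum_eq_zero_iff_of_nonneg (fun s _ => mul_nonneg (hπ0 s) (hh s))]
      exact hb0.symm
    have l : (∑ s, π s * (h s * Real.log (H s / Hb))) = 0 := by
      refine Finset.sum_eq_zero fun s hs => ?_
      rcases mul_eq_zero.mp (hz s hs) with h0 | h0 <;> simp [h0]
    rw [l, ent_of_expec_zero hπ0 hh hb0.symm]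
  · -- main case ; pointwise Young inequality
    have key : ∀ s, π s * (h s * Real.log (H s / Hb)) ≤
        π s * (h s * Real.log (h s / hb)) - π s * h s +
          hb * (π s * (if H s = 0 then 0 else H s / Hb)) := by
      intro s
      rcases eq_or_lt_of_le (hπ0 s) with hπs | hπs
      · rw [← hπs]; ring_nf; rfl
      rcases eq_or_lt_of_le (hh s) with hhs | hhs
      · rw [← hhs]
        have : 0 ≤ hb * (π s * (if H s = 0 then 0 else H s / Hb)) := by
          have : 0 ≤ (if H s = 0 then 0 else H s / Hb) := by
            split
            · exact le_refl 0
            · exact div_nonneg (hH s) hHpos.le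
          positivity
        simpa using this
      · have hHs : 0 < H s := by
          rcases eq_or_lt_of_le (hH s) with h0 | h0
          · exact absurd (hsupp s (ne_of_gt hπs) h0.symm) (ne_of_gt hhs)
          · exact h0
        rw [if_neg (ne_of_gt hHs)]
        -- Young : a * b ≤ a * log a - a + exp b  with a = h s / hb, b = log (H s / Hb)
        have hyoung : (h s / hb) * Real.log (H s / Hb) ≤
            (h s / hb) * Real.log (h s / hb) - h s / hb + H s / Hb := by
          have ha : 0 < h s / hb := by positivity
          have h1 : Real.log (H s / Hb) - Real.log (h s / hb) + 1 ≤
              Real.exp (Real.log (H s / Hb) - Real.log (h s / hb)) :=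
            Real.add_one_le_exp _
          have h2 : Real.exp (Real.log (H s / Hb) - Real.log (h s / hb)) =
              (H s / Hb) / (h s / hb) := by
            rw [Real.exp_sub, Real.exp_log (by positivity), Real.exp_log ha]
          rw [h2] at h1
          have h3 := mul_le_mul_of_nonneg_left h1 ha.le
          have h4 : (h s / hb) * ((H s / Hb) / (h s / hb)) = H s / Hb := by
            field_simp [show hb ≠ 0 from ne_of_gt hbpos]
          nlinarith
        have := mul_le_mul_of_nonneg_left hyoung (mul_nonneg (hπ0 s) (le_of_lt hbpos))
        have hexp : π s * hb * ((h s / hb) * Real.log (H s / Hb)) =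
            π s * (h s * Real.log (H s / Hb)) := by
          field_simp [show hb ≠ 0 from ne_of_gt hbpos]
        have hexp2 : π s * hb * ((h s / hb) * Real.log (h s / hb) - h s / hb + H s / Hb) =
            π s * (h s * Real.log (h s / hb)) - π s * h s + hb * (π s * (H s / Hb)) := by
          field_simp [show hb ≠ 0 from ne_of_gt hbpos]
        rw [hexp, hexp2] at this
        exact this
    have hsum := Finset.sum_le_sum (fun s (_ : s ∈ Finset.univ) => key s)
    have e1 : ∑ s, (π s * (h s * Real.log (h s / hb)) - π s * h s +
        hb * (π s * (if H s = 0 then 0 else H s / Hb))) = entOf π h := by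
      rw [Finset.sum_add_distrib, Finset.sum_sub_distrib]
      have c1 : ∑ s, π s * (h s * Real.log (h s / hb)) =
          expec π (fun s => h s * Real.log (h s)) - hb * Real.log hb := by
        have : ∀ s, π s * (h s * Real.log (h s / hb)) =
            π s * (h s * Real.log (h s)) - Real.log hb * (π s * h s) := by
          intro s; rw [mul_log_div_eq (hh s) hbpos]; ring
        rw [Finset.sum_congr rfl fun s _ => this s, Finset.sum_sub_distrib, ← Finset.mul_sum]
        simp only [expec, hhb]
        ring
      have c2 : ∑ s, π s * h s = hb := rfl
      have c3 : ∑ s, hb * (π s * (if H s = 0 then 0 else H s / Hb)) = hb := by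
        have : ∀ s, hb * (π s * (if H s = 0 then 0 else H s / Hb)) =
            (hb / Hb) * (π s * H s) := by
          intro s
          split
          · next hz => rw [hz]; ring
          · ring
        rw [Finset.sum_congr rfl fun s _ => this s, ← Finset.mul_sum]
        have : ∑ s, π s * H s = Hb := rfl
        rw [this]
        field_simp
      rw [c1, c2, c3, entOf]
      ring
    rw [e1] at hsum
    exact hsum

/-- convexity: entropy of a nonnegative combination is at most the combination of entropies. -/
lemma ent_sum_le {J : Type*} [Fintype J] {π : Ω → ℝ} {κ : J → ℝ} {h : J → Ω → ℝ}
    (hπ : SubP π) (hκ : ∀ j, 0 ≤ κ j) (hh : ∀ j s, 0 ≤ h j s) :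
    entOf π (fun s => ∑ j, κ j * h j s) ≤ ∑ j, κ j * entOf π (h j) := by
  obtain ⟨hπ0, hπ1 | hπ1⟩ := hπ
  swap
  · rw [ent_of_zero hπ1]
    refine Finset.sum_nonneg fun j _ => mul_nonneg (hκ j) ?_
    rw [ent_of_zero hπ1]
  set H : Ω → ℝ := fun s => ∑ j, κ j * h j s with hHdef
  have hH0 : ∀ s, 0 ≤ H s := fun s =>
    Finset.sum_nonneg fun j _ => mul_nonneg (hκ j) (hh j s)
  have hrhs : 0 ≤ ∑ j, κ j * entOf π (h j) :=
    Finset.sum_nonneg fun j _ => mul_nonneg (hκ j)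
      (ent_nonneg ⟨hπ0, Or.inl hπ1⟩ (hh j))
  rcases eq_or_lt_of_le (expec_nonneg hπ0 hH0) with hHb | hHb
  · rw [ent_of_expec_zero hπ0 hH0 hHb.symm]; exact hrhs
  -- Ent(H) = ∑ π H log (H / Hb)
  have e1 : entOf π H = ∑ s, π s * (H s * Real.log (H s / expec π H)) := by
    have : ∀ s, π s * (H s * Real.log (H s / expec π H)) =
        π s * (H s * Real.log (H s)) - Real.log (expec π H) * (π s * H s) := by
      intro s; rw [mul_log_div_eq (hH0 s) hHb]; ring
    rw [Finset.sum_congr rfl fun s _ => this s, Finset.sum_sub_distrib, ← Finset.mul_sum]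
    simp only [entOf, expec]
    ring
  rw [e1]
  have e2 : ∀ s, π s * (H s * Real.log (H s / expec π H)) =
      ∑ j, κ j * (π s * (h j s * Real.log (H s / expec π H))) := by
    intro s
    have hs : H s = ∑ j, κ j * h j s := rfl
    rw [hs, Finset.sum_mul, Finset.mul_sum]
    exact Finset.sum_congr rfl fun j _ => by ring
  rw [Finset.sum_congr rfl fun s _ => e2 s, Finset.sum_comm]
  refine Finset.sum_le_sum fun j _ => ?_
  rcases eq_or_lt_of_le (hκ j) with hj | hj
  · rw [← hj]; simp
  rw [← Finset.mul_sum]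
  refine mul_le_mul_of_nonneg_left ?_ hj.le
  refine ent_variational hπ0 hπ1 (hh j) hH0 hHb ?_
  intro s hπs hHs
  have : ∀ j' ∈ Finset.univ, κ j' * h j' s = 0 := by
    rw [← Finset.sum_eq_zero_iff_of_nonneg (fun j' _ => mul_nonneg (hκ j') (hh j' s))]
    exact hHs
  rcases mul_eq_zero.mp (this j (Finset.mem_univ j)) with h0 | h0
  · exact absurd h0 (ne_of_gt hj)
  · exact h0

/-- mixture decomposition identity for the entropy. -/
lemma ent_mix {J : Type*} [Fintype J] {π : Ω → ℝ} {w : J → ℝ} {ρ : J → Ω → ℝ} (f : Ω → ℝ)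
    (hmix : ∀ t, π t = ∑ j, w j * ρ j t) :
    entOf π f = ∑ j, w j * entOf (ρ j) f + entOf w (fun j => expec (ρ j) f) := by
  have h1 : ∀ F : Ω → ℝ, expec π F = ∑ j, w j * expec (ρ j) F := by
    intro F
    calc (∑ s, π s * F s) = ∑ s, ∑ j, w j * (ρ j s * F s) := by
          refine Finset.sum_congr rfl fun t _ => ?_
          rw [hmix t, Finset.sum_mul]
          exact Finset.sum_congr rfl fun j _ => by ring
      _ = ∑ j, ∑ s, w j * (ρ j s * F s) := Finset.sum_comm
      _ = ∑ j, w j * expec (ρ j) F := by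
          refine Finset.sum_congr rfl fun j _ => ?_
          unfold expec
          rw [Finset.mul_sum]
  have h2 : expec w (fun j => expec (ρ j) f) = expec π f := by
    rw [h1 f]; rfl
  simp only [entOf, h2, h1 (fun s => f s * Real.log (f s))]
  have e3 : ∑ j, w j * ((expec (ρ j) fun s => f s * Real.log (f s)) -
        expec (ρ j) f * Real.log (expec (ρ j) f)) =
      (∑ j, w j * expec (ρ j) fun s => f s * Real.log (f s)) -
        ∑ j, w j * (expec (ρ j) f * Real.log (expec (ρ j) f)) := by
    rw [← Finset.sum_sub_distrib]
    exact Finset.sum_congr rfl fun j _ => by ring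
  have e4 : (expec w fun j => expec (ρ j) f * Real.log (expec (ρ j) f)) =
      ∑ j, w j * (expec (ρ j) f * Real.log (expec (ρ j) f)) := rfl
  rw [e3, e4]
  ring

/-! ### Spin-system level basics -/

section Spin
variable {n q : ℕ} (S : SpinSystem n q)

lemma wt_nonneg (σ : Cfg n q) : 0 ≤ S.wt σ := by
  unfold SpinSystem.wt
  refine mul_nonneg (Finset.prod_nonneg fun x _ => Finset.prod_nonneg fun y _ => ?_)
    (Finset.prod_nonneg fun x _ => S.B_nonneg x (σ x))
  split
  · exact S.A_nonneg _ _ _ _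
  · exact zero_le_one

lemma condWt_nonneg (U : Finset (Fin n)) (τ σ : Cfg n q) : 0 ≤ S.condWt U τ σ := by
  unfold SpinSystem.condWt
  split
  · exact wt_nonneg S σ
  · exact le_refl 0

lemma condZ_nonneg (U : Finset (Fin n)) (τ : Cfg n q) : 0 ≤ S.condZ U τ :=
  Finset.sum_nonneg fun σ _ => condWt_nonneg S U τ σ

lemma condMu_nonneg (U : Finset (Fin n)) (τ σ : Cfg n q) : 0 ≤ S.condMu U τ σ :=
  div_nonneg (condWt_nonneg S U τ σ) (condZ_nonneg S U τ)

lemma subP_condMu (U : Finset (Fin n)) (τ : Cfg n q) : SubP (S.condMu U τ) := by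
  refine ⟨condMu_nonneg S U τ, ?_⟩
  by_cases h : S.condZ U τ = 0
  · right
    intro s
    have hz : ∀ σ ∈ Finset.univ, S.condWt U τ σ = 0 := by
      rw [← Finset.sum_eq_zero_iff_of_nonneg (fun σ _ => condWt_nonneg S U τ σ)]
      exact h
    unfold SpinSystem.condMu
    rw [hz s (Finset.mem_univ s)]
    simp
  · left
    unfold SpinSystem.condMu
    rw [← Finset.sum_div]
    exact div_self h

/-- if a configuration has nonzero conditional probability then it has positive weight
and agrees with the pinning. -/
lemma of_condMu_ne_zero {U : Finset (Fin n)} {τ s : Cfg n q} (h : S.condMu U τ s ≠ 0) :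
    0 < S.wt s ∧ ∀ x ∈ U, s x = τ x := by
  have hW : S.condWt U τ s ≠ 0 := by
    intro h0
    apply h
    unfold SpinSystem.condMu
    rw [h0, zero_div]
  unfold SpinSystem.condWt at hW
  by_cases hc : ∀ x ∈ U, s x = τ x
  · rw [if_pos hc] at hW
    exact ⟨lt_of_le_of_ne (wt_nonneg S s) (Ne.symm hW), hc⟩
  · rw [if_neg hc] at hW
    exact absurd rfl hW

lemma condWt_congr_base {U : Finset (Fin n)} {σ τ : Cfg n q} (h : ∀ x ∈ U, σ x = τ x) :
    S.condWt U σ = S.condWt U τ := by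
  funext ρ
  unfold SpinSystem.condWt
  refine if_congr ?_ rfl rfl
  exact forall₂_congr fun x hx => by rw [h x hx]

lemma condMu_congr_base {U : Finset (Fin n)} {σ τ : Cfg n q} (h : ∀ x ∈ U, σ x = τ x) :
    S.condMu U σ = S.condMu U τ := by
  funext ρ
  unfold SpinSystem.condMu SpinSystem.condZ
  rw [condWt_congr_base S h]

/-- tower property of conditional Gibbs measures. -/
lemma condMu_tower {U U' : Finset (Fin n)} (hUU' : U ⊆ U') (τ t : Cfg n q) :
    S.condMu U τ t = ∑ σ : Cfg n q, S.condMu U τ σ * S.condMu U' σ t := by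
  have hrhs : ∀ σ : Cfg n q, S.condMu U τ σ * S.condMu U' σ t =
      if (∀ x ∈ U', t x = σ x) then S.condMu U τ σ * (S.wt t / S.condZ U' t) else 0 := by
    intro σ
    by_cases hc : ∀ x ∈ U', t x = σ x
    · rw [if_pos hc]
      have h1 : S.condZ U' σ = S.condZ U' t := by
        unfold SpinSystem.condZ
        rw [condWt_congr_base S (fun x hx => (hc x hx).symm)]
      have h2 : S.condWt U' σ t = S.wt t := by
        unfold SpinSystem.condWt
        rw [if_pos hc]
      unfold SpinSystem.condMu
      rw [h1, h2]
    · rw [if_neg hc]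
      have h2 : S.condWt U' σ t = 0 := by
        unfold SpinSystem.condWt
        rw [if_neg hc]
      unfold SpinSystem.condMu
      rw [h2, zero_div, mul_zero]
  rw [Finset.sum_congr rfl fun σ _ => hrhs σ]
  by_cases hτ : ∀ x ∈ U, t x = τ x
  · -- case A
    have step1 : ∀ σ : Cfg n q, (if (∀ x ∈ U', t x = σ x) then
        S.condMu U τ σ * (S.wt t / S.condZ U' t) else 0) =
        ((if (∀ x ∈ U', t x = σ x) then S.wt σ else 0) / S.condZ U τ) *
          (S.wt t / S.condZ U' t) := by
      intro σ
      by_cases hc : ∀ x ∈ U', t x = σ x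
      · rw [if_pos hc, if_pos hc]
        have : S.condWt U τ σ = S.wt σ := by
          unfold SpinSystem.condWt
          rw [if_pos (fun x hx => by rw [← hc x (hUU' hx), hτ x hx])]
        unfold SpinSystem.condMu
        rw [this]
      · rw [if_neg hc, if_neg hc, zero_div, zero_mul]
    rw [Finset.sum_congr rfl fun σ _ => step1 σ, ← Finset.sum_mul, ← Finset.sum_div]
    have step2 : ∑ σ : Cfg n q, (if (∀ x ∈ U', t x = σ x) then S.wt σ else 0) =
        S.condZ U' t := by
      unfold SpinSystem.condZ SpinSystem.condWt
      refine Finset.sum_congr rfl fun σ _ => ?_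
      refine if_congr ?_ rfl rfl
      exact forall₂_congr fun x hx => eq_comm
    rw [step2]
    have hLHS : S.condMu U τ t = S.wt t / S.condZ U τ := by
      unfold SpinSystem.condMu SpinSystem.condWt
      rw [if_pos hτ]
    rw [hLHS]
    by_cases hz : S.condZ U' t = 0
    · have hwt : S.wt t = 0 := by
        have hle : S.condWt U' t t ≤ S.condZ U' t :=
          Finset.single_le_sum (fun σ _ => condWt_nonneg S U' t σ) (Finset.mem_univ t)
        have : S.condWt U' t t = S.wt t := by
          unfold SpinSystem.condWt
          rw [if_pos (fun x _ => rfl)]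
        rw [this, hz] at hle
        exact le_antisymm hle (wt_nonneg S t)
      rw [hwt, hz]
      simp
    · rw [div_mul_div_comm, mul_comm (S.condZ U' t), ← div_mul_div_comm,
        div_self hz, mul_one]
  · -- case B
    have hLHS : S.condMu U τ t = 0 := by
      unfold SpinSystem.condMu SpinSystem.condWt
      rw [if_neg hτ, zero_div]
    rw [hLHS]
    symm
    refine Finset.sum_eq_zero fun σ _ => ?_
    by_cases hc : ∀ x ∈ U', t x = σ x
    · rw [if_pos hc]
      have : S.condMu U τ σ = 0 := by
        unfold SpinSystem.condMu SpinSystem.condWt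
        rw [if_neg, zero_div]
        intro hall
        exact hτ fun x hx => by rw [hc x (hUU' hx), hall x hx]
      rw [this, zero_mul]
    · rw [if_neg hc]

lemma gibbs_eq_condMu_empty (τ : Cfg n q) : S.gibbs = S.condMu ∅ τ := by
  funext σ
  unfold SpinSystem.gibbs SpinSystem.condMu SpinSystem.condZ SpinSystem.condWt
  simp

lemma gibbs_nonneg (σ : Cfg n q) : 0 ≤ S.gibbs σ := by
  rw [gibbs_eq_condMu_empty S σ]
  exact condMu_nonneg S ∅ σ σ

lemma subP_gibbs : SubP S.gibbs := by
  rcases isEmpty_or_nonempty (Cfg n q) with hΩ | hΩ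
  · exact ⟨fun s => (IsEmpty.elim hΩ s), Or.inr fun s => (IsEmpty.elim hΩ s)⟩
  · rw [gibbs_eq_condMu_empty S Classical.ofNonempty]
    exact subP_condMu S ∅ _

lemma gibbs_tower (U : Finset (Fin n)) (t : Cfg n q) :
    S.gibbs t = ∑ σ : Cfg n q, S.gibbs σ * S.condMu U σ t := by
  rw [gibbs_eq_condMu_empty S t]
  exact condMu_tower S (Finset.empty_subset U) t t

lemma condMu_univ (s t : Cfg n q) :
    S.condMu Finset.univ s t = if t = s then S.wt s / S.wt s else 0 := by
  unfold SpinSystem.condMu SpinSystem.condZ SpinSystem.condWt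
  have h1 : ∀ t' : Cfg n q, (if (∀ x ∈ Finset.univ, t' x = s x) then S.wt t' else 0) =
      (if t' = s then S.wt t' else 0) := by
    intro t'
    refine if_congr ?_ rfl rfl
    simp [funext_iff]
  rw [h1, Finset.sum_congr rfl fun t' _ => h1 t', Finset.sum_ite_eq' Finset.univ s S.wt,
    if_pos (Finset.mem_univ s)]
  by_cases ht : t = s
  · rw [if_pos ht, if_pos ht, ht]
  · rw [if_neg ht, if_neg ht, zero_div]

lemma ent_condMu_univ (s : Cfg n q) (f : Cfg n q → ℝ) :
    entOf (S.condMu Finset.univ s) f = 0 := by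
  by_cases hw : S.wt s = 0
  · refine ent_of_zero fun t => ?_
    rw [condMu_univ, hw]
    simp
  · have hδ : S.condMu Finset.univ s = fun t => if t = s then 1 else 0 := by
      funext t
      rw [condMu_univ]
      by_cases ht : t = s
      · rw [if_pos ht, if_pos ht, div_self hw]
      · rw [if_neg ht, if_neg ht]
    have hexp : ∀ F : Cfg n q → ℝ, expec (S.condMu Finset.univ s) F = F s := by
      intro F
      rw [hδ]
      unfold expec
      have hpt : ∀ t, (if t = s then (1:ℝ) else 0) * F t = (if t = s then F t else 0) := by
        intro t
        split <;> simp
      rw [Finset.sum_congr rfl fun t _ => hpt t, Finset.sum_ite_eq' Finset.univ s F,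
        if_pos (Finset.mem_univ s)]
    unfold entOf
    rw [hexp, hexp]
    ring

/-- weighted tower rearrangement. -/
lemma sum_tower {U U' : Finset (Fin n)} (hUU' : U ⊆ U') (τ : Cfg n q) (e : Cfg n q → ℝ) :
    ∑ s : Cfg n q, S.condMu U τ s * ∑ σ : Cfg n q, S.condMu U' s σ * e σ
      = ∑ σ : Cfg n q, S.condMu U τ σ * e σ := by
  calc ∑ s : Cfg n q, S.condMu U τ s * ∑ σ : Cfg n q, S.condMu U' s σ * e σ
      = ∑ s : Cfg n q, ∑ σ : Cfg n q, S.condMu U τ s * S.condMu U' s σ * e σ := by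
        refine Finset.sum_congr rfl fun s _ => ?_
        rw [Finset.mul_sum]
        exact Finset.sum_congr rfl fun σ _ => by ring
    _ = ∑ σ : Cfg n q, ∑ s : Cfg n q, S.condMu U τ s * S.condMu U' s σ * e σ :=
        Finset.sum_comm
    _ = ∑ σ : Cfg n q, S.condMu U τ σ * e σ := by
        refine Finset.sum_congr rfl fun σ _ => ?_
        rw [← Finset.sum_mul, ← condMu_tower S hUU' τ σ]

/-- the same with the unconditioned Gibbs measure as the base. -/
lemma sum_tower_gibbs (U : Finset (Fin n)) (e : Cfg n q → ℝ) :
    ∑ s : Cfg n q, S.gibbs s * ∑ σ : Cfg n q, S.condMu U s σ * e σ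
      = ∑ σ : Cfg n q, S.gibbs σ * e σ := by
  calc ∑ s : Cfg n q, S.gibbs s * ∑ σ : Cfg n q, S.condMu U s σ * e σ
      = ∑ s : Cfg n q, ∑ σ : Cfg n q, S.gibbs s * S.condMu U s σ * e σ := by
        refine Finset.sum_congr rfl fun s _ => ?_
        rw [Finset.mul_sum]
        exact Finset.sum_congr rfl fun σ _ => by ring
    _ = ∑ σ : Cfg n q, ∑ s : Cfg n q, S.gibbs s * S.condMu U s σ * e σ :=
        Finset.sum_comm
    _ = ∑ σ : Cfg n q, S.gibbs σ * e σ := by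
        refine Finset.sum_congr rfl fun σ _ => ?_
        rw [← Finset.sum_mul, ← gibbs_tower S U σ]

/-- mixture decomposition of the entropy of a pinned measure over a finer pinning. -/
lemma ent_cond_mix {U U' : Finset (Fin n)} (hUU' : U ⊆ U') (τ : Cfg n q) (f : Cfg n q → ℝ) :
    entOf (S.condMu U τ) f =
      (∑ σ : Cfg n q, S.condMu U τ σ * entOf (S.condMu U' σ) f) +
        entOf (S.condMu U τ) (fun σ => expec (S.condMu U' σ) f) := by
  exact ent_mix f (fun t => condMu_tower S hUU' τ t)

lemma ent_cond_mix_ge {U U' : Finset (Fin n)} (hUU' : U ⊆ U') (τ : Cfg n q)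
    {f : Cfg n q → ℝ} (hf : ∀ σ, 0 ≤ f σ) :
    (∑ σ : Cfg n q, S.condMu U τ σ * entOf (S.condMu U' σ) f) ≤ entOf (S.condMu U τ) f := by
  rw [ent_cond_mix S hUU' τ f]
  have h0 : 0 ≤ entOf (S.condMu U τ) (fun σ => expec (S.condMu U' σ) f) :=
    ent_nonneg (subP_condMu S U τ)
      (fun σ => expec_nonneg (condMu_nonneg S U' σ) hf)
  linarith

end Spin

/-! ### Product structure over an independent set -/

section Product
variable {n q : ℕ} (S : SpinSystem n q) (R : Finset (Fin n)) (τ0 : Cfg n q)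

/-- single-site weight factor for sites of the independent set `R`, given the boundary `τ0`. -/
def pg (x : Fin n) (a : Fin q) : ℝ :=
  (∏ y ∈ Rᶜ, ((if x < y ∧ S.G.Adj x y then S.A x y a (τ0 y) else 1) *
              (if y < x ∧ S.G.Adj y x then S.A y x (τ0 y) a else 1))) * S.B x a

/-- constant part of the weight (contribution of the pinned boundary). -/
def pc : ℝ :=
  (∏ x ∈ Rᶜ, ∏ y ∈ Rᶜ, if x < y ∧ S.G.Adj x y then S.A x y (τ0 x) (τ0 y) else 1) *
  ∏ x ∈ Rᶜ, S.B x (τ0 x)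

/-- single-site partition function. -/
def pZ (x : Fin n) : ℝ := ∑ a, pg S R τ0 x a

lemma pg_nonneg (x : Fin n) (a : Fin q) : 0 ≤ pg S R τ0 x a := by
  unfold pg
  refine mul_nonneg (Finset.prod_nonneg fun y _ => mul_nonneg ?_ ?_) (S.B_nonneg x a) <;>
    · split
      · exact S.A_nonneg _ _ _ _
      · exact zero_le_one

lemma pc_nonneg : 0 ≤ pc S R τ0 := by
  unfold pc
  refine mul_nonneg (Finset.prod_nonneg fun x _ => Finset.prod_nonneg fun y _ => ?_)
    (Finset.prod_nonneg fun x _ => S.B_nonneg x (τ0 x))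
  split
  · exact S.A_nonneg _ _ _ _
  · exact zero_le_one

lemma pZ_nonneg (x : Fin n) : 0 ≤ pZ S R τ0 x :=
  Finset.sum_nonneg fun a _ => pg_nonneg S R τ0 x a

/-- factorization of the weight of configurations agreeing with `τ0` off `R`. -/
lemma wt_factor (hInd : ∀ x ∈ R, ∀ y ∈ R, ¬ S.G.Adj x y) (s : Cfg n q)
    (hs : ∀ x ∉ R, s x = τ0 x) :
    S.wt s = pc S R τ0 * ∏ x ∈ R, pg S R τ0 x (s x) := by
  have hsc : ∀ x ∈ Rᶜ, s x = τ0 x := fun x hx => hs x (Finset.mem_compl.mp hx)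
  have h1 : ∀ F : Fin n → ℝ, (∏ x : Fin n, F x) = (∏ x ∈ R, F x) * ∏ x ∈ Rᶜ, F x :=
    fun F => (Finset.prod_mul_prod_compl R F).symm
  unfold SpinSystem.wt
  rw [h1 (fun x => ∏ y, if x < y ∧ S.G.Adj x y then S.A x y (s x) (s y) else 1),
      h1 (fun x => S.B x (s x))]
  have C1 : (∏ x ∈ R, ∏ y : Fin n, (if x < y ∧ S.G.Adj x y then S.A x y (s x) (s y) else 1)) =
      ∏ x ∈ R, ∏ y ∈ Rᶜ, (if x < y ∧ S.G.Adj x y then S.A x y (s x) (τ0 y) else 1) := by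
    refine Finset.prod_congr rfl fun x hx => ?_
    rw [h1 (fun y => if x < y ∧ S.G.Adj x y then S.A x y (s x) (s y) else 1)]
    have hone : (∏ y ∈ R, (if x < y ∧ S.G.Adj x y then S.A x y (s x) (s y) else 1)) = 1 :=
      Finset.prod_eq_one fun y hy => if_neg (fun hcon => hInd x hx y hy hcon.2)
    rw [hone, one_mul]
    exact Finset.prod_congr rfl fun y hy => by rw [hsc y hy]
  have C2 : (∏ x ∈ Rᶜ, ∏ y : Fin n, (if x < y ∧ S.G.Adj x y then S.A x y (s x) (s y) else 1)) =
      (∏ x ∈ R, ∏ y ∈ Rᶜ, (if y < x ∧ S.G.Adj y x then S.A y x (τ0 y) (s x) else 1)) *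
      ∏ x ∈ Rᶜ, ∏ y ∈ Rᶜ, (if x < y ∧ S.G.Adj x y then S.A x y (τ0 x) (τ0 y) else 1) := by
    have e1 : ∀ x ∈ Rᶜ, (∏ y : Fin n, (if x < y ∧ S.G.Adj x y then S.A x y (s x) (s y) else 1)) =
        (∏ y ∈ R, (if x < y ∧ S.G.Adj x y then S.A x y (τ0 x) (s y) else 1)) *
        ∏ y ∈ Rᶜ, (if x < y ∧ S.G.Adj x y then S.A x y (τ0 x) (τ0 y) else 1) := by
      intro x hx
      rw [h1 (fun y => if x < y ∧ S.G.Adj x y then S.A x y (s x) (s y) else 1)]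
      congr 1
      · exact Finset.prod_congr rfl fun y _ => by rw [hsc x hx]
      · exact Finset.prod_congr rfl fun y hy => by rw [hsc x hx, hsc y hy]
    rw [Finset.prod_congr rfl e1, Finset.prod_mul_distrib]
    congr 1
    exact Finset.prod_comm
  have C3 : (∏ x ∈ Rᶜ, S.B x (s x)) = ∏ x ∈ Rᶜ, S.B x (τ0 x) :=
    Finset.prod_congr rfl fun x hx => by rw [hsc x hx]
  rw [C1, C2, C3]
  have hpg : (∏ x ∈ R, pg S R τ0 x (s x)) =
      ((∏ x ∈ R, ∏ y ∈ Rᶜ, (if x < y ∧ S.G.Adj x y then S.A x y (s x) (τ0 y) else 1)) *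
       ∏ x ∈ R, ∏ y ∈ Rᶜ, (if y < x ∧ S.G.Adj y x then S.A y x (τ0 y) (s x) else 1)) *
      ∏ x ∈ R, S.B x (s x) := by
    unfold pg
    rw [Finset.prod_mul_distrib]
    congr 1
    calc ∏ x ∈ R, ∏ y ∈ Rᶜ, ((if x < y ∧ S.G.Adj x y then S.A x y (s x) (τ0 y) else 1) *
            (if y < x ∧ S.G.Adj y x then S.A y x (τ0 y) (s x) else 1))
        = ∏ x ∈ R, ((∏ y ∈ Rᶜ, (if x < y ∧ S.G.Adj x y then S.A x y (s x) (τ0 y) else 1)) *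
            ∏ y ∈ Rᶜ, (if y < x ∧ S.G.Adj y x then S.A y x (τ0 y) (s x) else 1)) :=
          Finset.prod_congr rfl fun x _ => Finset.prod_mul_distrib
      _ = _ := Finset.prod_mul_distrib
  rw [hpg]
  unfold pc
  ring

/-- sum-product exchange over configurations. -/
lemma sum_config_prod (F : Fin n → Fin q → ℝ) :
    ∑ s : Cfg n q, ∏ y, F y (s y) = ∏ y, ∑ a, F y a := by
  rw [Finset.prod_univ_sum, Fintype.piFinset_univ]

lemma condZ_prod (hInd : ∀ x ∈ R, ∀ y ∈ R, ¬ S.G.Adj x y) {Z : Finset (Fin n)} (hZ : Z ⊆ R)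
    {s : Cfg n q} (hs : ∀ x ∉ R, s x = τ0 x) :
    S.condZ Zᶜ s =
      pc S R τ0 * ((∏ y ∈ R \ Z, pg S R τ0 y (s y)) * ∏ y ∈ Z, pZ S R τ0 y) := by
  unfold SpinSystem.condZ
  have key : ∀ σ : Cfg n q, S.condWt Zᶜ s σ =
      pc S R τ0 * ((∏ y ∈ R \ Z, pg S R τ0 y (s y)) *
        ∏ y, (if y ∈ Z then pg S R τ0 y (σ y) else if σ y = s y then (1:ℝ) else 0)) := by
    intro σ
    unfold SpinSystem.condWt
    by_cases hcond : ∀ x ∈ Zᶜ, σ x = s x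
    · rw [if_pos hcond]
      have hσZ : ∀ x ∉ Z, σ x = s x := fun x hx => hcond x (Finset.mem_compl.mpr hx)
      have hσR : ∀ x ∉ R, σ x = τ0 x := fun x hx => by
        rw [hσZ x (fun hc => hx (hZ hc)), hs x hx]
      rw [wt_factor S R τ0 hInd σ hσR]
      have split1 : (∏ x ∈ R, pg S R τ0 x (σ x)) =
          (∏ y ∈ R \ Z, pg S R τ0 y (s y)) * ∏ y ∈ Z, pg S R τ0 y (σ y) := by
        rw [← Finset.prod_sdiff hZ]
        congr 1
        exact Finset.prod_congr rfl fun y hy => by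
          rw [hσZ y (Finset.mem_sdiff.mp hy).2]
      have split2 : (∏ y, (if y ∈ Z then pg S R τ0 y (σ y) else if σ y = s y then (1:ℝ) else 0))
          = ∏ y ∈ Z, pg S R τ0 y (σ y) := by
        rw [← Finset.prod_mul_prod_compl Z]
        have e1 : (∏ y ∈ Z, (if y ∈ Z then pg S R τ0 y (σ y) else if σ y = s y then (1:ℝ) else 0))
            = ∏ y ∈ Z, pg S R τ0 y (σ y) :=
          Finset.prod_congr rfl fun y hy => if_pos hy
        have e2 : (∏ y ∈ Zᶜ, (if y ∈ Z then pg S R τ0 y (σ y) else if σ y = s y then (1:ℝ) else 0))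
            = 1 := by
          refine Finset.prod_eq_one fun y hy => ?_
          rw [if_neg (Finset.mem_compl.mp hy), if_pos (hcond y hy)]
        rw [e1, e2, mul_one]
      rw [split1, split2]
    · rw [if_neg hcond]
      push_neg at hcond
      obtain ⟨x, hxZc, hxne⟩ := hcond
      have : (∏ y, (if y ∈ Z then pg S R τ0 y (σ y) else if σ y = s y then (1:ℝ) else 0)) = 0 := by
        refine Finset.prod_eq_zero (Finset.mem_univ x) ?_
        rw [if_neg (Finset.mem_compl.mp hxZc), if_neg hxne]
      rw [this]
      ring
  rw [Finset.sum_congr rfl fun σ _ => key σ, ← Finset.mul_sum, ← Finset.mul_sum,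
    sum_config_prod (fun y a => if y ∈ Z then pg S R τ0 y a else if a = s y then (1:ℝ) else 0)]
  congr 2
  have e : ∀ y : Fin n, (∑ a, (if y ∈ Z then pg S R τ0 y a else if a = s y then (1:ℝ) else 0)) =
      (if y ∈ Z then pZ S R τ0 y else 1) := by
    intro y
    by_cases hy : y ∈ Z
    · rw [if_pos hy, Finset.sum_congr rfl fun a _ => if_pos hy]
      rfl
    · rw [if_neg hy, Finset.sum_congr rfl fun a _ => if_neg hy,
        Finset.sum_ite_eq' Finset.univ (s y) (fun _ => (1:ℝ)), if_pos (Finset.mem_univ _)]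
  rw [Finset.prod_congr rfl fun y _ => e y, Finset.prod_ite_mem Finset.univ Z
    (fun y => pZ S R τ0 y), Finset.univ_inter]

lemma condMu_prod (hInd : ∀ x ∈ R, ∀ y ∈ R, ¬ S.G.Adj x y) {Z : Finset (Fin n)} (hZ : Z ⊆ R)
    {s : Cfg n q} (hs : ∀ x ∉ R, s x = τ0 x) (hw : 0 < S.wt s) (t : Cfg n q) :
    S.condMu Zᶜ s t = if (∀ x ∉ Z, t x = s x) then
      ∏ y ∈ Z, (pg S R τ0 y (t y) / pZ S R τ0 y) else 0 := by
  have hfac := wt_factor S R τ0 hInd s hs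
  have hpc : 0 < pc S R τ0 := by
    rcases mul_pos_iff.mp (hfac ▸ hw) with ⟨h1, _⟩ | ⟨h1, h2⟩
    · exact h1
    · exact absurd (pc_nonneg S R τ0) (not_le.mpr h1)
  have hprodpos : 0 < ∏ x ∈ R, pg S R τ0 x (s x) := by
    rcases mul_pos_iff.mp (hfac ▸ hw) with ⟨_, h2⟩ | ⟨h1, _⟩
    · exact h2
    · exact absurd (pc_nonneg S R τ0) (not_le.mpr h1)
  have hpgpos : ∀ y ∈ R, 0 < pg S R τ0 y (s y) := by
    intro y hy
    rcases (Finset.prod_ne_zero_iff.mp (ne_of_gt hprodpos)) y hy with h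
    exact lt_of_le_of_ne (pg_nonneg S R τ0 y (s y)) (Ne.symm h)
  have hpZpos : ∀ y ∈ R, 0 < pZ S R τ0 y := fun y hy =>
    lt_of_lt_of_le (hpgpos y hy)
      (Finset.single_le_sum (fun a _ => pg_nonneg S R τ0 y a) (Finset.mem_univ (s y)))
  have ha : 0 < pc S R τ0 * ∏ y ∈ R \ Z, pg S R τ0 y (s y) :=
    mul_pos hpc (Finset.prod_pos fun y hy => hpgpos y (Finset.mem_sdiff.mp hy).1)
  unfold SpinSystem.condMu
  rw [condZ_prod S R τ0 hInd hZ hs]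
  by_cases hcond : ∀ x ∉ Z, t x = s x
  · rw [if_pos hcond]
    have hcond' : ∀ x ∈ Zᶜ, t x = s x := fun x hx => hcond x (Finset.mem_compl.mp hx)
    have hWt : S.condWt Zᶜ s t = S.wt t := by
      unfold SpinSystem.condWt
      rw [if_pos hcond']
    have htR : ∀ x ∉ R, t x = τ0 x := fun x hx => by
      rw [hcond x (fun hc => hx (hZ hc)), hs x hx]
    rw [hWt, wt_factor S R τ0 hInd t htR, ← Finset.prod_sdiff (f := fun x => pg S R τ0 x (t x)) hZ]
    have e1 : (∏ y ∈ R \ Z, pg S R τ0 y (t y)) = ∏ y ∈ R \ Z, pg S R τ0 y (s y) :=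
      Finset.prod_congr rfl fun y hy => by rw [hcond y (Finset.mem_sdiff.mp hy).2]
    rw [e1]
    rw [show pc S R τ0 * ((∏ y ∈ R \ Z, pg S R τ0 y (s y)) * ∏ y ∈ Z, pg S R τ0 y (t y)) =
      (pc S R τ0 * ∏ y ∈ R \ Z, pg S R τ0 y (s y)) * ∏ y ∈ Z, pg S R τ0 y (t y) by ring]
    rw [show pc S R τ0 * ((∏ y ∈ R \ Z, pg S R τ0 y (s y)) * ∏ y ∈ Z, pZ S R τ0 y) =
      (pc S R τ0 * ∏ y ∈ R \ Z, pg S R τ0 y (s y)) * ∏ y ∈ Z, pZ S R τ0 y by ring]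
    rw [mul_div_mul_left _ _ (ne_of_gt ha), Finset.prod_div_distrib]
  · rw [if_neg hcond]
    have : S.condWt Zᶜ s t = 0 := by
      unfold SpinSystem.condWt
      rw [if_neg]
      intro hall
      exact hcond fun x hx => hall x (Finset.mem_compl.mpr hx)
    rw [this, zero_div]

/-- expected conditional entropy of `f` on the free block `W`, under pinning `τ0` off `R`. -/
def Phi (W : Finset (Fin n)) (f : Cfg n q → ℝ) : ℝ :=
  ∑ s : Cfg n q, S.condMu Rᶜ τ0 s * entOf (S.condMu Wᶜ s) f

/-- per-site entropy term relative to the free block `W`. -/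
def tW (W : Finset (Fin n)) (x : Fin n) (f : Cfg n q → ℝ) : ℝ :=
  ∑ s : Cfg n q, S.condMu Rᶜ τ0 s *
    entOf (S.condMu ({x} : Finset (Fin n))ᶜ s)
      (fun t => expec (S.condMu ((W ∩ R.filter (fun y => x < y))ᶜ) t) f)

lemma Phi_chain {W W' : Finset (Fin n)} (hW' : W' ⊆ W) (hW : W ⊆ R) (f : Cfg n q → ℝ) :
    Phi S R τ0 W f = Phi S R τ0 W' f +
      ∑ s : Cfg n q, S.condMu Rᶜ τ0 s *
        entOf (S.condMu Wᶜ s) (fun σ => expec (S.condMu W'ᶜ σ) f) := by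
  unfold Phi
  have hcompl : Wᶜ ⊆ W'ᶜ := Finset.compl_subset_compl.mpr hW'
  have e1 : ∀ s : Cfg n q, S.condMu Rᶜ τ0 s * entOf (S.condMu Wᶜ s) f =
      S.condMu Rᶜ τ0 s * (∑ σ : Cfg n q, S.condMu Wᶜ s σ * entOf (S.condMu W'ᶜ σ) f) +
      S.condMu Rᶜ τ0 s * entOf (S.condMu Wᶜ s) (fun σ => expec (S.condMu W'ᶜ σ) f) := by
    intro s
    rw [ent_cond_mix S hcompl s f]
    ring
  rw [Finset.sum_congr rfl fun s _ => e1 s, Finset.sum_add_distrib]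
  congr 1
  exact sum_tower S (Finset.compl_subset_compl.mpr hW) τ0
    (fun σ => entOf (S.condMu W'ᶜ σ) f)

/-- reindexing a sum over configurations pinned off a single site. -/
lemma sum_update (t : Cfg n q) (x : Fin n) (F : Fin q → ℝ) (G : Cfg n q → ℝ) :
    ∑ t' : Cfg n q, (if (∀ y ∉ ({x} : Finset (Fin n)), t' y = t y) then F (t' x) else 0) * G t'
      = ∑ a, F a * G (Function.update t x a) := by
  have key : ∀ t' : Cfg n q,
      (if (∀ y ∉ ({x} : Finset (Fin n)), t' y = t y) then F (t' x) else 0) * G t'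
      = ∑ a, (if t' = Function.update t x a then F a * G t' else 0) := by
    intro t'
    by_cases hc : ∀ y ∉ ({x} : Finset (Fin n)), t' y = t y
    · rw [if_pos hc]
      have ht' : t' = Function.update t x (t' x) := by
        funext y
        by_cases hy : y = x
        · subst hy; rw [Function.update_self]
        · rw [Function.update_of_ne hy]
          exact hc y (by simp [hy])
      have hiff : ∀ a, (t' = Function.update t x a) ↔ a = t' x := by
        intro a
        constructor
        · intro h; rw [h, Function.update_self]
        · intro h; rw [h]; exact ht'
      rw [Finset.sum_congr rfl fun a _ => if_congr (hiff a) rfl rfl,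
        Finset.sum_ite_eq' Finset.univ (t' x) (fun a => F a * G t'),
        if_pos (Finset.mem_univ _)]
    · rw [if_neg hc, zero_mul]
      symm
      refine Finset.sum_eq_zero fun a _ => ?_
      rw [if_neg]
      intro h
      apply hc
      intro y hy
      rw [h, Function.update_of_ne (by simpa using hy)]
  rw [Finset.sum_congr rfl fun t' _ => key t', Finset.sum_comm]
  refine Finset.sum_congr rfl fun a _ => ?_
  rw [Finset.sum_ite_eq' Finset.univ (Function.update t x a)
    (fun t' => F a * G t'), if_pos (Finset.mem_univ _)]

/-- one-site conditional expectation as an explicit single-spin expectation. -/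
lemma expec_single (hInd : ∀ x ∈ R, ∀ y ∈ R, ¬ S.G.Adj x y) {x : Fin n} (hxR : x ∈ R)
    {u : Cfg n q} (hu : ∀ y ∉ R, u y = τ0 y) (hw : 0 < S.wt u) (G : Cfg n q → ℝ) :
    expec (S.condMu (({x} : Finset (Fin n))ᶜ) u) G =
      expec (fun a => pg S R τ0 x a / pZ S R τ0 x) (fun a => G (Function.update u x a)) := by
  unfold expec
  have hx1 : ({x} : Finset (Fin n)) ⊆ R := Finset.singleton_subset_iff.mpr hxR
  have e1 : ∀ t' : Cfg n q, S.condMu (({x} : Finset (Fin n))ᶜ) u t' * G t' =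
      (if (∀ y ∉ ({x} : Finset (Fin n)), t' y = u y) then (pg S R τ0 x (t' x) / pZ S R τ0 x)
        else 0) * G t' := by
    intro t'
    rw [condMu_prod S R τ0 hInd hx1 hu hw t']
    congr 1
    by_cases hc : ∀ y ∉ ({x} : Finset (Fin n)), t' y = u y
    · rw [if_pos hc, if_pos hc, Finset.prod_singleton]
    · rw [if_neg hc, if_neg hc]
  rw [Finset.sum_congr rfl fun t' _ => e1 t']
  exact sum_update u x (fun a => pg S R τ0 x a / pZ S R τ0 x) G

/-- one-site conditional entropy as an explicit single-spin entropy. -/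
lemma ent_single (hInd : ∀ x ∈ R, ∀ y ∈ R, ¬ S.G.Adj x y) {x : Fin n} (hxR : x ∈ R)
    {u : Cfg n q} (hu : ∀ y ∉ R, u y = τ0 y) (hw : 0 < S.wt u) (G : Cfg n q → ℝ) :
    entOf (S.condMu (({x} : Finset (Fin n))ᶜ) u) G =
      entOf (fun a => pg S R τ0 x a / pZ S R τ0 x) (fun a => G (Function.update u x a)) := by
  unfold entOf
  rw [expec_single S R τ0 hInd hxR hu hw G,
    expec_single S R τ0 hInd hxR hu hw (fun t => G t * Real.log (G t))]

/-- the entropy with respect to a block `W` of a function depending only on one free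
coordinate `x ∈ W` equals the one-site entropy (in `ν`-average). -/
lemma per_eq (hInd : ∀ x ∈ R, ∀ y ∈ R, ¬ S.G.Adj x y) {W : Finset (Fin n)} (hW : W ⊆ R)
    {x : Fin n} (hx : x ∈ W) (g : Cfg n q → ℝ)
    (hg : ∀ t u : Cfg n q, (∀ y, y ∉ W.erase x → t y = u y) → g t = g u) :
    ∑ s : Cfg n q, S.condMu Rᶜ τ0 s * entOf (S.condMu Wᶜ s) g
      = ∑ s : Cfg n q, S.condMu Rᶜ τ0 s * entOf (S.condMu ({x} : Finset (Fin n))ᶜ s) g := by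
  have hxsub : ({x} : Finset (Fin n)) ⊆ W := Finset.singleton_subset_iff.mpr hx
  have e1 : ∀ s : Cfg n q, S.condMu Rᶜ τ0 s * entOf (S.condMu Wᶜ s) g =
      S.condMu Rᶜ τ0 s *
        (∑ σ : Cfg n q, S.condMu Wᶜ s σ * entOf (S.condMu ({x} : Finset (Fin n))ᶜ σ) g) +
      S.condMu Rᶜ τ0 s *
        entOf (S.condMu Wᶜ s) (fun σ => expec (S.condMu ({x} : Finset (Fin n))ᶜ σ) g) := by
    intro s
    rw [ent_cond_mix S (Finset.compl_subset_compl.mpr hxsub) s g]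
    ring
  rw [Finset.sum_congr rfl fun s _ => e1 s, Finset.sum_add_distrib]
  have e2 : (∑ s : Cfg n q, S.condMu Rᶜ τ0 s *
      (∑ σ : Cfg n q, S.condMu Wᶜ s σ * entOf (S.condMu ({x} : Finset (Fin n))ᶜ σ) g)) =
      ∑ s : Cfg n q, S.condMu Rᶜ τ0 s * entOf (S.condMu ({x} : Finset (Fin n))ᶜ s) g :=
    sum_tower S (Finset.compl_subset_compl.mpr hW) τ0 _
  rw [e2]
  have e3 : ∀ s : Cfg n q, S.condMu Rᶜ τ0 s *
      entOf (S.condMu Wᶜ s) (fun σ => expec (S.condMu ({x} : Finset (Fin n))ᶜ σ) g) = 0 := by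
    intro s
    by_cases hνs : S.condMu Rᶜ τ0 s = 0
    · rw [hνs, zero_mul]
    · obtain ⟨hws, hsR'⟩ := of_condMu_ne_zero S hνs
      have hsE : ∀ y ∉ R, s y = τ0 y := fun y hy => hsR' y (Finset.mem_compl.mpr hy)
      -- the conditional expectation over site x is constant on the support
      set K : ℝ := expec (fun a => pg S R τ0 x a / pZ S R τ0 x)
        (fun a => g (Function.update s x a)) with hK
      have hconst : ∀ t : Cfg n q, S.condMu Wᶜ s t ≠ 0 →
          expec (S.condMu (({x} : Finset (Fin n))ᶜ) t) g = K := by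
        intro t hmt
        obtain ⟨hwt, htW⟩ := of_condMu_ne_zero S hmt
        have htE : ∀ y ∉ R, t y = τ0 y := fun y hy => by
          rw [htW y (Finset.mem_compl.mpr fun hc => hy (hW hc)), hsE y hy]
        rw [expec_single S R τ0 hInd (hW hx) htE hwt g, hK]
        unfold expec
        refine Finset.sum_congr rfl fun a _ => ?_
        congr 1
        refine hg _ _ fun y hy => ?_
        by_cases hyx : y = x
        · subst hyx; rw [Function.update_self, Function.update_self]
        · rw [Function.update_of_ne hyx, Function.update_of_ne hyx]
          have hyW : y ∉ W := fun hc => hy (Finset.mem_erase.mpr ⟨hyx, hc⟩)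
          exact htW y (Finset.mem_compl.mpr hyW)
      have : entOf (S.condMu Wᶜ s) (fun σ => expec (S.condMu (({x} : Finset (Fin n))ᶜ) σ) g)
          = 0 := by
        rw [ent_congr (g := fun _ => K) hconst]
        exact ent_const (subP_condMu S Wᶜ s).2 K
      rw [this, mul_zero]
  rw [Finset.sum_eq_zero fun s _ => e3 s, add_zero]

/-- telescoping chain rule for block entropies over an independent set. -/
lemma Phi_eq_sum (hInd : ∀ x ∈ R, ∀ y ∈ R, ¬ S.G.Adj x y) (f : Cfg n q → ℝ)
    (W : Finset (Fin n)) : W ⊆ R → Phi S R τ0 W f = ∑ x ∈ W, tW S R τ0 W x f := by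
  induction W using Finset.strongInduction with
  | _ W ih =>
    intro hWR
    rcases W.eq_empty_or_nonempty with hW0 | hWne
    · subst hW0
      rw [Finset.sum_empty]
      unfold Phi
      rw [Finset.compl_empty]
      exact Finset.sum_eq_zero fun s _ => by rw [ent_condMu_univ, mul_zero]
    · have hxW : W.min' hWne ∈ W := W.min'_mem hWne
      set x := W.min' hWne with hxdef
      set W' := W.erase x with hW'def
      have hW'W : W' ⊆ W := Finset.erase_subset x W
      have hW'R : W' ⊆ R := hW'W.trans hWR
      have hstep := Phi_chain S R τ0 hW'W hWR f
      rw [hstep, ih W' (Finset.erase_ssubset hxW) hW'R]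
      -- identify the filtered blocks
      have hmin : ∀ y ∈ W, x ≤ y := fun y hy => W.min'_le y hy
      have hterm : ∀ y ∈ W', tW S R τ0 W' y f = tW S R τ0 W y f := by
        intro y hy
        have hWF : W' ∩ R.filter (fun z => y < z) = W ∩ R.filter (fun z => y < z) := by
          ext z
          simp only [Finset.mem_inter, Finset.mem_filter, hW'def, Finset.mem_erase]
          constructor
          · rintro ⟨⟨_, hzW⟩, hzF⟩; exact ⟨hzW, hzF⟩
          · rintro ⟨hzW, hzR, hyz⟩
            refine ⟨⟨?_, hzW⟩, hzR, hyz⟩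
            intro hzx
            subst hzx
            exact absurd (lt_of_le_of_lt (hmin y (hW'W hy)) hyz) (lt_irrefl _)
        unfold tW
        rw [hWF]
      have hWx : W ∩ R.filter (fun z => x < z) = W' := by
        ext z
        simp only [Finset.mem_inter, Finset.mem_filter, hW'def, Finset.mem_erase]
        constructor
        · rintro ⟨hzW, _, hxz⟩
          exact ⟨ne_of_gt hxz, hzW⟩
        · rintro ⟨hzx, hzW⟩
          exact ⟨hzW, hWR hzW, lt_of_le_of_ne (hmin z hzW) (Ne.symm hzx)⟩
      have hper : (∑ s : Cfg n q, S.condMu Rᶜ τ0 s *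
          entOf (S.condMu Wᶜ s) (fun σ => expec (S.condMu W'ᶜ σ) f)) = tW S R τ0 W x f := by
        unfold tW
        rw [hWx]
        exact per_eq S R τ0 hInd hWR hxW (fun σ => expec (S.condMu W'ᶜ σ) f)
          (fun t u htu => by
            show expec (S.condMu W'ᶜ t) f = expec (S.condMu W'ᶜ u) f
            rw [condMu_congr_base S (τ := u) fun y hy => htu y (Finset.mem_compl.mp hy)])
      rw [Finset.sum_congr rfl hterm, hper]
      exact Finset.sum_erase_add W _ hxW

/-- resampling kernel weight on the block `Z`. -/
def kap (Z : Finset (Fin n)) (ζ : Cfg n q) : ℝ :=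
  ∏ y, (if y ∈ Z then pg S R τ0 y (ζ y) / pZ S R τ0 y else (q : ℝ)⁻¹)

end Product

/-- override the coordinates in `Z` by `ζ`. -/
def ovr {n q : ℕ} (Z : Finset (Fin n)) (t ζ : Cfg n q) : Cfg n q :=
  fun y => if y ∈ Z then ζ y else t y

lemma ovr_mem {n q : ℕ} {Z : Finset (Fin n)} {t ζ : Cfg n q} {y : Fin n} (h : y ∈ Z) :
    ovr Z t ζ y = ζ y := if_pos h

lemma ovr_not_mem {n q : ℕ} {Z : Finset (Fin n)} {t ζ : Cfg n q} {y : Fin n} (h : y ∉ Z) :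
    ovr Z t ζ y = t y := if_neg h

section Product2
variable {n q : ℕ} (S : SpinSystem n q) (R : Finset (Fin n)) (τ0 : Cfg n q)

lemma kap_nonneg (Z : Finset (Fin n)) (ζ : Cfg n q) : 0 ≤ kap S R τ0 Z ζ := by
  refine Finset.prod_nonneg fun y _ => ?_
  split
  · exact div_nonneg (pg_nonneg S R τ0 y (ζ y)) (pZ_nonneg S R τ0 y)
  · positivity

/-- summing the kernel weights over `ζ` recovers the product formula. -/
lemma keyb (Z : Finset (Fin n)) (t t' : Cfg n q) :
    (∑ ζ : Cfg n q, if ovr Z t ζ = t' then kap S R τ0 Z ζ else 0)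
      = if (∀ y ∉ Z, t' y = t y) then ∏ y ∈ Z, (pg S R τ0 y (t' y) / pZ S R τ0 y) else 0 := by
  by_cases hagree : ∀ y ∉ Z, t' y = t y
  · rw [if_pos hagree]
    have hiff : ∀ ζ : Cfg n q, (ovr Z t ζ = t') ↔ (∀ y ∈ Z, ζ y = t' y) := by
      intro ζ
      constructor
      · intro h y hy
        rw [← h, ovr_mem hy]
      · intro h
        funext y
        by_cases hy : y ∈ Z
        · rw [ovr_mem hy]; exact h y hy
        · rw [ovr_not_mem hy]; exact (hagree y hy).symm
    have hsummand : ∀ ζ : Cfg n q, (if ovr Z t ζ = t' then kap S R τ0 Z ζ else 0) =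
        ∏ y, (if y ∈ Z then (if ζ y = t' y then pg S R τ0 y (ζ y) / pZ S R τ0 y else 0)
          else (q : ℝ)⁻¹) := by
      intro ζ
      by_cases hc : ovr Z t ζ = t'
      · rw [if_pos hc]
        unfold kap
        refine Finset.prod_congr rfl fun y _ => ?_
        by_cases hy : y ∈ Z
        · rw [if_pos hy, if_pos hy, if_pos ((hiff ζ).mp hc y hy)]
        · rw [if_neg hy, if_neg hy]
      · rw [if_neg hc]
        symm
        have : ∃ y ∈ Z, ζ y ≠ t' y := by
          by_contra hno
          push_neg at hno
          exact hc ((hiff ζ).mpr hno)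
        obtain ⟨y, hyZ, hyne⟩ := this
        refine Finset.prod_eq_zero (Finset.mem_univ y) ?_
        rw [if_pos hyZ, if_neg hyne]
    rw [Finset.sum_congr rfl fun ζ _ => hsummand ζ,
      sum_config_prod (fun y a => if y ∈ Z then
        (if a = t' y then pg S R τ0 y a / pZ S R τ0 y else 0) else (q : ℝ)⁻¹)]
    have e : ∀ y : Fin n, (∑ a, (if y ∈ Z then
        (if a = t' y then pg S R τ0 y a / pZ S R τ0 y else 0) else (q : ℝ)⁻¹)) =
        (if y ∈ Z then pg S R τ0 y (t' y) / pZ S R τ0 y else 1) := by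
      intro y
      by_cases hy : y ∈ Z
      · rw [if_pos hy, Finset.sum_congr rfl fun a _ => if_pos hy,
          Finset.sum_ite_eq' Finset.univ (t' y)
            (fun a => pg S R τ0 y a / pZ S R τ0 y), if_pos (Finset.mem_univ _)]
      · rw [if_neg hy, Finset.sum_congr rfl fun a _ => if_neg hy, Finset.sum_const,
          Finset.card_univ, Fintype.card_fin, nsmul_eq_mul]
        have hq : (q : ℝ) ≠ 0 := Nat.cast_ne_zero.mpr (Nat.pos_iff_ne_zero.mp (Fin.pos (t' y)))
        exact mul_inv_cancel₀ hq
    rw [Finset.prod_congr rfl fun y _ => e y,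
      Finset.prod_ite_mem Finset.univ Z (fun y => pg S R τ0 y (t' y) / pZ S R τ0 y),
      Finset.univ_inter]
  · rw [if_neg hagree]
    refine Finset.sum_eq_zero fun ζ _ => ?_
    rw [if_neg]
    intro hc
    apply hagree
    intro y hy
    rw [← hc, ovr_not_mem hy]

/-- positivity of the factors at a positive-weight configuration. -/
lemma pos_of_wt (hInd : ∀ x ∈ R, ∀ y ∈ R, ¬ S.G.Adj x y) {s : Cfg n q}
    (hs : ∀ y ∉ R, s y = τ0 y) (hw : 0 < S.wt s) :
    0 < pc S R τ0 ∧ ∀ y ∈ R, 0 < pg S R τ0 y (s y) := by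
  have hfac := wt_factor S R τ0 hInd s hs
  have hpc : 0 < pc S R τ0 := by
    rcases mul_pos_iff.mp (hfac ▸ hw) with ⟨h1, _⟩ | ⟨h1, _⟩
    · exact h1
    · exact absurd (pc_nonneg S R τ0) (not_le.mpr h1)
  have hprodpos : 0 < ∏ x ∈ R, pg S R τ0 x (s x) := by
    rcases mul_pos_iff.mp (hfac ▸ hw) with ⟨_, h2⟩ | ⟨h1, _⟩
    · exact h2
    · exact absurd (pc_nonneg S R τ0) (not_le.mpr h1)
  refine ⟨hpc, fun y hy => ?_⟩
  have := Finset.prod_ne_zero_iff.mp (ne_of_gt hprodpos) y hy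
  exact lt_of_le_of_ne (pg_nonneg S R τ0 y (s y)) (Ne.symm this)

/-- data processing : averaging over an independent block before taking a one-site
entropy can only decrease it. -/
lemma dp_core (hInd : ∀ x ∈ R, ∀ y ∈ R, ¬ S.G.Adj x y) {Z : Finset (Fin n)} (hZ : Z ⊆ R)
    {x : Fin n} (hxR : x ∈ R) (hxZ : x ∉ Z) {v : Cfg n q → ℝ} (hv : ∀ σ, 0 ≤ v σ) :
    ∑ s : Cfg n q, S.condMu Rᶜ τ0 s *
        entOf (S.condMu (({x} : Finset (Fin n))ᶜ) s) (fun t => expec (S.condMu Zᶜ t) v)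
      ≤ ∑ s : Cfg n q, S.condMu Rᶜ τ0 s *
          entOf (S.condMu (({x} : Finset (Fin n))ᶜ) s) v := by
  have main : ∀ s : Cfg n q, S.condMu Rᶜ τ0 s ≠ 0 →
      entOf (S.condMu (({x} : Finset (Fin n))ᶜ) s) (fun t => expec (S.condMu Zᶜ t) v)
        ≤ ∑ s' : Cfg n q, S.condMu Zᶜ s s' *
            entOf (S.condMu (({x} : Finset (Fin n))ᶜ) s') v := by
    intro s hνs
    obtain ⟨hws, hsR'⟩ := of_condMu_ne_zero S hνs
    have hsE : ∀ y ∉ R, s y = τ0 y := fun y hy => hsR' y (Finset.mem_compl.mpr hy)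
    have hposs := pos_of_wt S R τ0 hInd hsE hws
    -- Step A
    have hA : entOf (S.condMu (({x} : Finset (Fin n))ᶜ) s) (fun t => expec (S.condMu Zᶜ t) v)
        = entOf (S.condMu (({x} : Finset (Fin n))ᶜ) s)
            (fun t => ∑ ζ : Cfg n q, kap S R τ0 Z ζ * v (ovr Z t ζ)) := by
      refine ent_congr fun t hmt => ?_
      obtain ⟨hwt, htx⟩ := of_condMu_ne_zero S hmt
      have htE : ∀ y ∉ R, t y = τ0 y := by
        intro y hy
        have hne : y ≠ x := fun h => hy (h ▸ hxR)
        rw [htx y (Finset.mem_compl.mpr (by simp [hne])), hsE y hy]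
      show expec (S.condMu Zᶜ t) v = _
      unfold expec
      rw [Finset.sum_congr rfl fun t' _ => by rw [condMu_prod S R τ0 hInd hZ htE hwt t']]
      symm
      have h1 : ∀ ζ : Cfg n q, kap S R τ0 Z ζ * v (ovr Z t ζ) =
          ∑ t' : Cfg n q, (if ovr Z t ζ = t' then kap S R τ0 Z ζ else 0) * v t' := by
        intro ζ
        have hpt : ∀ t' : Cfg n q, (if ovr Z t ζ = t' then kap S R τ0 Z ζ else 0) * v t' =
            (if ovr Z t ζ = t' then kap S R τ0 Z ζ * v t' else 0) := by
          intro t'; split <;> simp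
        rw [Finset.sum_congr rfl fun t' _ => hpt t',
          Finset.sum_ite_eq Finset.univ (ovr Z t ζ) (fun t' => kap S R τ0 Z ζ * v t'),
          if_pos (Finset.mem_univ _)]
      rw [Finset.sum_congr rfl fun ζ _ => h1 ζ, Finset.sum_comm]
      refine Finset.sum_congr rfl fun t' _ => ?_
      rw [← Finset.sum_mul, keyb S R τ0 Z t t']
    -- Step B : convexity
    have hB : entOf (S.condMu (({x} : Finset (Fin n))ᶜ) s)
          (fun t => ∑ ζ : Cfg n q, kap S R τ0 Z ζ * v (ovr Z t ζ))
        ≤ ∑ ζ : Cfg n q, kap S R τ0 Z ζ *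
            entOf (S.condMu (({x} : Finset (Fin n))ᶜ) s) (fun t => v (ovr Z t ζ)) :=
      ent_sum_le (subP_condMu S _ s) (kap_nonneg S R τ0 Z) (fun ζ t => hv _)
    -- Step C : pushforward
    have hC : ∀ ζ : Cfg n q, kap S R τ0 Z ζ *
          entOf (S.condMu (({x} : Finset (Fin n))ᶜ) s) (fun t => v (ovr Z t ζ))
        = kap S R τ0 Z ζ * entOf (S.condMu (({x} : Finset (Fin n))ᶜ) (ovr Z s ζ)) v := by
      intro ζ
      by_cases hκ : kap S R τ0 Z ζ = 0
      · rw [hκ, zero_mul, zero_mul]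
      · congr 1
        have hpgz : ∀ y ∈ Z, pg S R τ0 y (ζ y) ≠ 0 := by
          intro y hy
          have hne := Finset.prod_ne_zero_iff.mp hκ y (Finset.mem_univ y)
          rw [if_pos hy] at hne
          exact fun h0 => hne (by rw [h0, zero_div])
        have hs' : ∀ y ∉ R, ovr Z s ζ y = τ0 y := fun y hy => by
          rw [ovr_not_mem (fun hc => hy (hZ hc)), hsE y hy]
        have hws' : 0 < S.wt (ovr Z s ζ) := by
          rw [wt_factor S R τ0 hInd _ hs']
          refine mul_pos hposs.1 (Finset.prod_pos fun y hyR => ?_)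
          by_cases hyZ : y ∈ Z
          · rw [ovr_mem hyZ]
            exact lt_of_le_of_ne (pg_nonneg S R τ0 y (ζ y)) (Ne.symm (hpgz y hyZ))
          · rw [ovr_not_mem hyZ]
            exact hposs.2 y hyR
        rw [ent_single S R τ0 hInd hxR hsE hws (fun t => v (ovr Z t ζ)),
          ent_single S R τ0 hInd hxR hs' hws' v]
        congr 1
        funext a
        show v (ovr Z (Function.update s x a) ζ) = v (Function.update (ovr Z s ζ) x a)
        congr 1
        funext y
        by_cases hyZ : y ∈ Z
        · have hyx : y ≠ x := fun h => hxZ (h ▸ hyZ)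
          rw [ovr_mem hyZ, Function.update_of_ne hyx, ovr_mem hyZ]
        · by_cases hyx : y = x
          · subst hyx
            rw [ovr_not_mem hyZ, Function.update_self, Function.update_self]
          · rw [ovr_not_mem hyZ, Function.update_of_ne hyx, Function.update_of_ne hyx,
              ovr_not_mem hyZ]
    -- Step D : recombination
    have hD : (∑ ζ : Cfg n q, kap S R τ0 Z ζ *
          entOf (S.condMu (({x} : Finset (Fin n))ᶜ) (ovr Z s ζ)) v)
        = ∑ s' : Cfg n q, S.condMu Zᶜ s s' *
            entOf (S.condMu (({x} : Finset (Fin n))ᶜ) s') v := by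
      have h1 : ∀ ζ : Cfg n q, kap S R τ0 Z ζ *
          entOf (S.condMu (({x} : Finset (Fin n))ᶜ) (ovr Z s ζ)) v =
          ∑ s' : Cfg n q, (if ovr Z s ζ = s' then kap S R τ0 Z ζ else 0) *
            entOf (S.condMu (({x} : Finset (Fin n))ᶜ) s') v := by
        intro ζ
        have hpt : ∀ s' : Cfg n q, (if ovr Z s ζ = s' then kap S R τ0 Z ζ else 0) *
            entOf (S.condMu (({x} : Finset (Fin n))ᶜ) s') v =
            (if ovr Z s ζ = s' then kap S R τ0 Z ζ *
              entOf (S.condMu (({x} : Finset (Fin n))ᶜ) s') v else 0) := by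
          intro s'; split <;> simp
        rw [Finset.sum_congr rfl fun s' _ => hpt s',
          Finset.sum_ite_eq Finset.univ (ovr Z s ζ)
            (fun s' => kap S R τ0 Z ζ * entOf (S.condMu (({x} : Finset (Fin n))ᶜ) s') v),
          if_pos (Finset.mem_univ _)]
      rw [Finset.sum_congr rfl fun ζ _ => h1 ζ, Finset.sum_comm]
      refine Finset.sum_congr rfl fun s' _ => ?_
      rw [← Finset.sum_mul, keyb S R τ0 Z s s', ← condMu_prod S R τ0 hInd hZ hsE hws s']
    rw [hA]
    refine hB.trans (le_of_eq ?_)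
    rw [Finset.sum_congr rfl fun ζ _ => hC ζ, hD]
  have h2 : ∀ s ∈ Finset.univ, S.condMu Rᶜ τ0 s *
      entOf (S.condMu (({x} : Finset (Fin n))ᶜ) s) (fun t => expec (S.condMu Zᶜ t) v)
      ≤ S.condMu Rᶜ τ0 s * ∑ s' : Cfg n q, S.condMu Zᶜ s s' *
          entOf (S.condMu (({x} : Finset (Fin n))ᶜ) s') v := by
    intro s _
    by_cases hνs : S.condMu Rᶜ τ0 s = 0
    · rw [hνs, zero_mul, zero_mul]
    · exact mul_le_mul_of_nonneg_left (main s hνs) (condMu_nonneg S Rᶜ τ0 s)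
  refine (Finset.sum_le_sum h2).trans (le_of_eq ?_)
  exact sum_tower S (Finset.compl_subset_compl.mpr hZ) τ0
    (fun s' => entOf (S.condMu (({x} : Finset (Fin n))ᶜ) s') v)

lemma tW_nonneg {W : Finset (Fin n)} (x : Fin n) {f : Cfg n q → ℝ} (hf : ∀ σ, 0 ≤ f σ) :
    0 ≤ tW S R τ0 W x f := by
  refine Finset.sum_nonneg fun s _ => mul_nonneg (condMu_nonneg S Rᶜ τ0 s) ?_
  exact ent_nonneg (subP_condMu S _ s)
    (fun t => expec_nonneg (condMu_nonneg S _ t) hf)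

lemma Phi_nonneg {W : Finset (Fin n)} {f : Cfg n q → ℝ} (hf : ∀ σ, 0 ≤ f σ) :
    0 ≤ Phi S R τ0 W f :=
  Finset.sum_nonneg fun s _ => mul_nonneg (condMu_nonneg S Rᶜ τ0 s)
    (ent_nonneg (subP_condMu S _ s) hf)

/-- per-site terms relative to a sub-block dominate the global per-site terms. -/
lemma tW_mono (hInd : ∀ x ∈ R, ∀ y ∈ R, ¬ S.G.Adj x y) {W : Finset (Fin n)} (hW : W ⊆ R)
    {x : Fin n} (hx : x ∈ W) {f : Cfg n q → ℝ} (hf : ∀ σ, 0 ≤ f σ) :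
    tW S R τ0 R x f ≤ tW S R τ0 W x f := by
  set Z := R.filter (fun y => x < y) with hZdef
  set Z' := W ∩ Z with hZ'def
  have hZR : Z ⊆ R := Finset.filter_subset _ R
  have hxZ : x ∉ Z := by
    rw [hZdef]
    simp [Finset.mem_filter]
  have hRR : R ∩ Z = Z := Finset.inter_eq_right.mpr hZR
  have hWZ : W ∩ R.filter (fun y => x < y) = Z' := rfl
  unfold tW
  rw [hRR, hWZ]
  set v : Cfg n q → ℝ := fun σ => expec (S.condMu Z'ᶜ σ) f with hv
  have hvnn : ∀ σ, 0 ≤ v σ := fun σ => expec_nonneg (condMu_nonneg S _ σ) hf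
  have hZZ' : Z' ⊆ Z := Finset.inter_subset_right
  have htower : ∀ t : Cfg n q, expec (S.condMu Zᶜ t) f = expec (S.condMu Zᶜ t) v := by
    intro t
    exact (sum_tower S (Finset.compl_subset_compl.mpr hZZ') t f).symm
  have e1 : (fun t => expec (S.condMu Zᶜ t) f) = fun t => expec (S.condMu Zᶜ t) v := by
    funext t
    exact htower t
  rw [e1]
  exact dp_core S R τ0 hInd hZR (hW hx) hxZ hvnn

/-- the per-`τ0` general block factorization over the independent set `R`. -/
lemma LOC (hInd : ∀ x ∈ R, ∀ y ∈ R, ¬ S.G.Adj x y) (α : Finset (Fin n) → ℝ)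
    (hα0 : ∀ B, 0 ≤ α B) {f : Cfg n q → ℝ} (hf : ∀ σ, 0 ≤ f σ) :
    deltaOf n α * Phi S R τ0 R f ≤
      ∑ B : Finset (Fin n), α B * Phi S R τ0 (B ∩ R) f := by
  rw [Phi_eq_sum S R τ0 hInd f R (subset_refl R), Finset.mul_sum]
  have hdle : ∀ x : Fin n, deltaOf n α ≤
      ∑ B ∈ Finset.univ.filter (fun B => x ∈ B), α B := by
    intro x
    exact ciInf_le (Set.Finite.bddBelow (Set.finite_range _)) x
  calc ∑ x ∈ R, deltaOf n α * tW S R τ0 R x f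
      ≤ ∑ x ∈ R, (∑ B ∈ Finset.univ.filter (fun B => x ∈ B), α B) * tW S R τ0 R x f := by
        refine Finset.sum_le_sum fun x _ => ?_
        exact mul_le_mul_of_nonneg_right (hdle x) (tW_nonneg S R τ0 x hf)
    _ = ∑ x ∈ R, ∑ B : Finset (Fin n), (if x ∈ B then α B * tW S R τ0 R x f else 0) := by
        refine Finset.sum_congr rfl fun x _ => ?_
        rw [Finset.sum_filter, Finset.sum_mul]
        refine Finset.sum_congr rfl fun B _ => ?_
        split <;> simp
    _ = ∑ B : Finset (Fin n), ∑ x ∈ R, (if x ∈ B then α B * tW S R τ0 R x f else 0) :=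
        Finset.sum_comm
    _ ≤ ∑ B : Finset (Fin n), α B * Phi S R τ0 (B ∩ R) f := by
        refine Finset.sum_le_sum fun B _ => ?_
        have e1 : (∑ x ∈ R, (if x ∈ B then α B * tW S R τ0 R x f else 0)) =
            ∑ x ∈ B ∩ R, α B * tW S R τ0 R x f := by
          rw [← Finset.sum_filter]
          congr 1
          rw [Finset.filter_mem_eq_inter, Finset.inter_comm]
        rw [e1, Phi_eq_sum S R τ0 hInd f (B ∩ R) Finset.inter_subset_right, Finset.mul_sum]
        refine Finset.sum_le_sum fun x hx => ?_
        exact mul_le_mul_of_nonneg_left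
          (tW_mono S R τ0 hInd Finset.inter_subset_right (by exact hx) hf) (hα0 B)

end Product2

/-! ### Glue : muEnt facts and the main inequality -/

section Glue
variable {n q : ℕ} (S : SpinSystem n q)

lemma muEnt_nonneg (B : Finset (Fin n)) {f : Cfg n q → ℝ} (hf : ∀ σ, 0 ≤ f σ) :
    0 ≤ S.muEnt B f := by
  unfold SpinSystem.muEnt
  exact Finset.sum_nonneg fun σ _ => mul_nonneg (gibbs_nonneg S σ)
    (ent_nonneg (subP_condMu S _ σ) hf)

lemma muEnt_le_ent (B : Finset (Fin n)) {f : Cfg n q → ℝ} (hf : ∀ σ, 0 ≤ f σ) :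
    S.muEnt B f ≤ entOf S.gibbs f := by
  have hmix := ent_mix (π := S.gibbs) (w := S.gibbs) (ρ := fun σ => S.condMu Bᶜ σ) f
    (fun t => gibbs_tower S Bᶜ t)
  have h0 : 0 ≤ entOf S.gibbs (fun σ => expec (S.condMu Bᶜ σ) f) :=
    ent_nonneg (subP_gibbs S) (fun σ => expec_nonneg (condMu_nonneg S _ σ) hf)
  unfold SpinSystem.muEnt
  rw [hmix]
  linarith

lemma muEnt_mono {B' B : Finset (Fin n)} (hBB : B' ⊆ B) {f : Cfg n q → ℝ}
    (hf : ∀ σ, 0 ≤ f σ) : S.muEnt B' f ≤ S.muEnt B f := by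
  unfold SpinSystem.muEnt
  have hcompl : Bᶜ ⊆ B'ᶜ := Finset.compl_subset_compl.mpr hBB
  have h1 : ∀ σ : Cfg n q,
      S.gibbs σ * (∑ t : Cfg n q, S.condMu Bᶜ σ t * entOf (S.condMu B'ᶜ t) f) ≤
      S.gibbs σ * entOf (S.condMu Bᶜ σ) f := fun σ =>
    mul_le_mul_of_nonneg_left (ent_cond_mix_ge S hcompl σ hf) (gibbs_nonneg S σ)
  have h2 := Finset.sum_le_sum fun σ (_ : σ ∈ Finset.univ) => h1 σ
  rw [sum_tower_gibbs S Bᶜ (fun t => entOf (S.condMu B'ᶜ t) f)] at h2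
  exact h2

/-- the key inequality for a single independent set. -/
lemma key_indep {R : Finset (Fin n)} (hInd : ∀ x ∈ R, ∀ y ∈ R, ¬ S.G.Adj x y)
    (α : Finset (Fin n) → ℝ) (hα0 : ∀ B, 0 ≤ α B) {f : Cfg n q → ℝ}
    (hf : ∀ σ, 0 ≤ f σ) :
    deltaOf n α * S.muEnt R f ≤ ∑ B : Finset (Fin n), α B * S.muEnt B f := by
  have hdec : ∀ T : Finset (Fin n),
      S.muEnt T f = ∑ τ : Cfg n q, S.gibbs τ * Phi S R τ T f := by
    intro T
    unfold SpinSystem.muEnt Phi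
    exact (sum_tower_gibbs S Rᶜ (fun s => entOf (S.condMu Tᶜ s) f)).symm
  calc deltaOf n α * S.muEnt R f
      = ∑ τ : Cfg n q, S.gibbs τ * (deltaOf n α * Phi S R τ R f) := by
        rw [hdec R, Finset.mul_sum]
        exact Finset.sum_congr rfl fun τ _ => by ring
    _ ≤ ∑ τ : Cfg n q, S.gibbs τ *
          (∑ B : Finset (Fin n), α B * Phi S R τ (B ∩ R) f) := by
        refine Finset.sum_le_sum fun τ _ => ?_
        exact mul_le_mul_of_nonneg_left (LOC S R τ hInd α hα0 hf) (gibbs_nonneg S τ)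
    _ = ∑ B : Finset (Fin n), α B * S.muEnt (B ∩ R) f := by
        have e1 : ∀ τ : Cfg n q, S.gibbs τ *
            (∑ B : Finset (Fin n), α B * Phi S R τ (B ∩ R) f)
            = ∑ B : Finset (Fin n), α B * (S.gibbs τ * Phi S R τ (B ∩ R) f) := by
          intro τ
          rw [Finset.mul_sum]
          exact Finset.sum_congr rfl fun B _ => by ring
        rw [Finset.sum_congr rfl fun τ _ => e1 τ, Finset.sum_comm]
        refine Finset.sum_congr rfl fun B _ => ?_
        rw [← Finset.mul_sum, ← hdec (B ∩ R)]
    _ ≤ ∑ B : Finset (Fin n), α B * S.muEnt B f := by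
        refine Finset.sum_le_sum fun B _ => ?_
        exact mul_le_mul_of_nonneg_left
          (muEnt_mono S Finset.inter_subset_left hf) (hα0 B)

lemma deltaOf_nonneg (α : Finset (Fin n) → ℝ) (hα0 : ∀ B, 0 ≤ α B) :
    0 ≤ deltaOf n α :=
  Real.iInf_nonneg fun x => Finset.sum_nonneg fun B _ => hα0 B

end Glue

end KPFGBF

/-- `k`-partite factorization of entropy implies general block
factorization of entropy with constant `C·k`. -/
theorem KPF_implies_GBF
    {n q k : ℕ} (S : SpinSystem n q) (hTC : S.TotallyConnected)
    (P : Fin k → Finset (Fin n)) (hP : IsIndepPartition S.G P)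
    (C : ℝ) (hKPF : KPF S P C) :
    GBF S (C * k) := by
  intro α hα0 hα1 f hf
  have hδ0 : 0 ≤ deltaOf n α := KPFGBF.deltaOf_nonneg α hα0
  have hmu0 : ∀ B : Finset (Fin n), 0 ≤ S.muEnt B f := fun B => KPFGBF.muEnt_nonneg S B hf
  have hkey : ∀ i : Fin k, deltaOf n α * S.muEnt (P i) f ≤
      ∑ B : Finset (Fin n), α B * S.muEnt B f :=
    fun i => KPFGBF.key_indep S (hP.2 i) α hα0 hf
  have hEnt := hKPF f hf
  have hEntnn : 0 ≤ entOf S.gibbs f := KPFGBF.ent_nonneg (KPFGBF.subP_gibbs S) hf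
  by_cases hC : 0 ≤ C
  · calc deltaOf n α * entOf S.gibbs f
        ≤ deltaOf n α * (C * ∑ i : Fin k, S.muEnt (P i) f) :=
          mul_le_mul_of_nonneg_left hEnt hδ0
      _ = ∑ i : Fin k, C * (deltaOf n α * S.muEnt (P i) f) := by
          rw [Finset.mul_sum, Finset.mul_sum]
          exact Finset.sum_congr rfl fun i _ => by ring
      _ ≤ ∑ i : Fin k, C * (∑ B : Finset (Fin n), α B * S.muEnt B f) := by
          refine Finset.sum_le_sum fun i _ => ?_
          exact mul_le_mul_of_nonneg_left (hkey i) hC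
      _ = C * k * ∑ B : Finset (Fin n), α B * S.muEnt B f := by
          rw [Finset.sum_const, Finset.card_univ, Fintype.card_fin, nsmul_eq_mul]
          ring
  · push_neg at hC
    have hsum0 : 0 ≤ ∑ i : Fin k, S.muEnt (P i) f :=
      Finset.sum_nonneg fun i _ => hmu0 (P i)
    have hEnt0 : entOf S.gibbs f ≤ 0 :=
      hEnt.trans (mul_nonpos_of_nonpos_of_nonneg hC.le hsum0)
    have hent_eq : entOf S.gibbs f = 0 := le_antisymm hEnt0 hEntnn
    have hmuB : ∀ B : Finset (Fin n), S.muEnt B f = 0 := fun B =>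
      le_antisymm ((KPFGBF.muEnt_le_ent S B hf).trans_eq hent_eq) (hmu0 B)
    rw [hent_eq, mul_zero]
    rw [Finset.sum_congr rfl fun B (_ : B ∈ Finset.univ) => by rw [hmuB B, mul_zero]]
    simp
end
end
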